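/- arXiv:1705.03561 — 5 statements merged into one kernel-verified Lean document; each statement's English description precedes it below -/
import Mathlib

section
/- Let H be a 3-uniform linear hypergraph containing no Berge cycle of length 5, and let v be a vertex of H. Then the number of hyperedges h of H with |h ∩ N₁(v)| ≥ 2, where N₁(v) is the set of vertices sharing a hyperedge with v, is at most 6·d(v), where d(v) is the degree of v in H. -/
open Finset

/-- Degree of a vertex: number of hyperedges containing it. -/
def hyperDeg {V : Type*} [DecidableEq V] (H : Finset (Finset V)) (v : V) : ℕ :=
  (H.filter fun e => v ∈ e).card

/-- First neighborhood: vertices other than `v` sharing a hyperedge with `v`. -/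
def N1 {V : Type*} [DecidableEq V] (H : Finset (Finset V)) (v : V) : Finset V :=
  ((H.filter fun e => v ∈ e).biUnion id).erase v

/-- A hypergraph is linear if any two distinct hyperedges share at most one vertex. -/
def IsLinear {V : Type*} [DecidableEq V] (H : Finset (Finset V)) : Prop :=
  ∀ e ∈ H, ∀ f ∈ H, e ≠ f → (e ∩ f).card ≤ 1

/-- A Berge cycle of length `k`: `k` distinct vertices and `k` distinct hyperedges,
with `v i, v (i+1) ∈ h i` cyclically. -/
def HasBergeCycle {V : Type*} (H : Finset (Finset V)) (k : ℕ) : Prop :=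
  ∃ (v : ZMod k → V) (h : ZMod k → Finset V),
    Function.Injective v ∧ Function.Injective h ∧
    ∀ i, h i ∈ H ∧ v i ∈ h i ∧ v (i + 1) ∈ h i

/-!
Split the counted edges into those through `v`, at most `d(v)` of them, and the outer edges,
which avoid `v`. An outer edge meets `N₁(v)` in two vertices lying on two distinct edges through
`v`, so it is attached to both. If an edge `e = {v, a, b}` has at least six attached outer edges,
they all pass through `a` or all through `b`: otherwise a missing outer edge pins every second
neighbour of the `a`-edges (resp. `b`-edges) to one edge through `v` (else a Berge `C₅` closes
through `e`), and linearity leaves room for at most `2 + 2` attached edges. Two such large edges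
through `v` cannot share an attached edge `h`, since a further attached edge at each of them,
chosen to avoid the other, closes a Berge `C₅` through `v` and `h`. So every outer edge is
attached to an edge through `v` with at most five attached edges, and there are at most `5 d(v)`
outer edges.
-/

section

variable {V : Type*} [DecidableEq V] {H : Finset (Finset V)}

theorem IsLinear.eq_of_mem_of_mem (hLin : IsLinear H) {e f : Finset V} (he : e ∈ H)
    (hf : f ∈ H) {x y : V} (hxy : x ≠ y) (hxe : x ∈ e) (hye : y ∈ e) (hxf : x ∈ f)
    (hyf : y ∈ f) : e = f := by
  by_contra hne
  have : 1 < #(e ∩ f) := one_lt_card.mpr ⟨x, by simp [hxe, hxf], y, by simp [hye, hyf], hxy⟩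
  exact absurd (hLin e he f hf hne) (by omega)

theorem IsLinear.card_le_of_forall_mem (hLin : IsLinear H) {S : Finset (Finset V)}
    (hS : S ⊆ H) {c : V} {T : Finset V} (hcT : c ∉ T) (hc : ∀ h ∈ S, c ∈ h)
    (hT : ∀ h ∈ S, ∃ x ∈ T, x ∈ h) : #S ≤ #T :=
  card_le_card_of_forall_subsingleton (fun h x => x ∈ h) hT fun _ hx _ ⟨h, hh⟩ _ ⟨g, hg⟩ =>
    hLin.eq_of_mem_of_mem (hS h) (hS g) (ne_of_mem_of_not_mem hx hcT).symm (hc _ h) hh (hc _ g) hg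

theorem not_four_mem_of_card_eq_three {s : Finset V} (hs : #s = 3) {a b c d : V}
    (hl : [a, b, c, d].Nodup) (ha : a ∈ s) (hb : b ∈ s) (hc : c ∈ s) (hd : d ∈ s) : False := by
  have : #({a, b, c, d} : Finset V) ≤ #s := card_le_card (by simp [insert_subset_iff, *])
  rw [show ({a, b, c, d} : Finset V) = [a, b, c, d].toFinset by simp,
    List.toFinset_card_of_nodup hl, hs] at this
  simp at this

theorem hasBergeCycle_five (hUnif : ∀ e ∈ H, #e = 3) {v₀ v₁ v₂ v₃ v₄ : V}
    (hv : [v₀, v₁, v₂, v₃, v₄].Nodup) {e₀ e₁ e₂ e₃ e₄ : Finset V}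
    (he₀ : e₀ ∈ H) (he₁ : e₁ ∈ H) (he₂ : e₂ ∈ H) (he₃ : e₃ ∈ H) (he₄ : e₄ ∈ H)
    (h₀₀ : v₀ ∈ e₀) (h₁₀ : v₁ ∈ e₀) (h₁₁ : v₁ ∈ e₁) (h₂₁ : v₂ ∈ e₁) (h₂₂ : v₂ ∈ e₂)
    (h₃₂ : v₃ ∈ e₂) (h₃₃ : v₃ ∈ e₃) (h₄₃ : v₄ ∈ e₃) (h₄₄ : v₄ ∈ e₄) (h₀₄ : v₀ ∈ e₄)
    (h₀₁ : e₀ ≠ e₁) (h₁₂ : e₁ ≠ e₂) (h₂₃ : e₂ ≠ e₃) (h₃₄ : e₃ ≠ e₄) (h₄₀ : e₄ ≠ e₀) :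
    HasBergeCycle H 5 := by
  -- Non-consecutive edges of the cycle differ: together they carry four vertices.
  have hne {e f : Finset V} (he : e ∈ H) {a b c d : V} (hl : [a, b, c, d].Nodup)
      (ha : a ∈ e) (hb : b ∈ e) (hc : c ∈ f) (hd : d ∈ f) : e ≠ f := by
    rintro rfl
    exact not_four_mem_of_card_eq_three (hUnif e he) hl ha hb hc hd
  simp only [List.nodup_cons, List.mem_cons, List.not_mem_nil, or_false, not_or,
    List.nodup_nil, not_false_eq_true, and_true] at hv
  obtain ⟨⟨d₀₁, d₀₂, d₀₃, d₀₄⟩, ⟨d₁₂, d₁₃, d₁₄⟩, ⟨d₂₃, d₂₄⟩, d₃₄⟩ := hv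
  have h₀₂ := hne he₀ (by simp; grind) h₀₀ h₁₀ h₂₂ h₃₂
  have h₀₃ := hne he₀ (by simp; grind) h₀₀ h₁₀ h₃₃ h₄₃
  have h₁₃ := hne he₁ (by simp; grind) h₁₁ h₂₁ h₃₃ h₄₃
  have h₁₄ := hne he₁ (by simp; grind) h₁₁ h₂₁ h₄₄ h₀₄
  have h₂₄ := hne he₂ (by simp; grind) h₂₂ h₃₂ h₄₄ h₀₄
  refine ⟨![v₀, v₁, v₂, v₃, v₄], ![e₀, e₁, e₂, e₃, e₄], ?_, ?_, ?_⟩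
  · intro i j hij
    fin_cases i <;> fin_cases j <;>
      first | rfl | (simp at hij; first | exact absurd hij ‹_› | exact absurd hij.symm ‹_›)
  · intro i j hij
    fin_cases i <;> fin_cases j <;>
      first | rfl | (simp at hij; first | exact absurd hij ‹_› | exact absurd hij.symm ‹_›)
  · intro i
    fin_cases i <;> exact ⟨by assumption, by assumption, by assumption⟩

theorem mem_N1 {v u : V} : u ∈ N1 H v ↔ u ≠ v ∧ ∃ e ∈ H, v ∈ e ∧ u ∈ e := by
  simp [N1, and_assoc]

def outerEdges (H : Finset (Finset V)) (v : V) : Finset (Finset V) :=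
  {h ∈ H | v ∉ h ∧ 2 ≤ #(h ∩ N1 H v)}

def outerEdgesAt (H : Finset (Finset V)) (v : V) (e : Finset V) : Finset (Finset V) :=
  {h ∈ outerEdges H v | ∃ w ∈ e, w ∈ h}

section

variable {v : V} {e h : Finset V}

theorem mem_outerEdges : h ∈ outerEdges H v ↔ h ∈ H ∧ v ∉ h ∧ 2 ≤ #(h ∩ N1 H v) :=
  mem_filter

theorem mem_outerEdgesAt : h ∈ outerEdgesAt H v e ↔ h ∈ outerEdges H v ∧ ∃ w ∈ e, w ∈ h :=
  mem_filter

theorem outerEdgesAt_subset : outerEdgesAt H v e ⊆ H :=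
  fun _ hh => (mem_outerEdges.1 (mem_outerEdgesAt.1 hh).1).1

theorem exists_mem_N1_ne_of_mem_outerEdges (hh : h ∈ outerEdges H v) (c : V) :
    ∃ z ∈ h, z ∈ N1 H v ∧ z ≠ c := by
  obtain ⟨z, hz, hzc⟩ := exists_mem_ne (s := h ∩ N1 H v) (mem_outerEdges.1 hh).2.2 c
  exact ⟨z, (mem_inter.1 hz).1, (mem_inter.1 hz).2, hzc⟩

end

section

variable {v : V} {e : Finset V}

theorem card_filter_mem_outerEdgesAt_le_two (hUnif : ∀ e ∈ H, #e = 3) (hLin : IsLinear H)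
    (hNoC5 : ¬ HasBergeCycle H 5) (he : e ∈ H) (hve : v ∈ e) {a b : V} (hab : a ≠ b)
    (heab : e.erase v = {a, b}) {h₀ : Finset V} (h₀mem : h₀ ∈ outerEdgesAt H v e)
    (ha₀ : a ∉ h₀) : #{h ∈ outerEdgesAt H v e | a ∈ h} ≤ 2 := by
  have hae : a ≠ v ∧ a ∈ e := mem_erase.1 (by simp [heab])
  have hbe : b ≠ v ∧ b ∈ e := mem_erase.1 (by simp [heab])
  obtain ⟨h₀out, w, hwe, hw₀⟩ := mem_outerEdgesAt.1 h₀mem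
  obtain ⟨h₀H, hv₀, -⟩ := mem_outerEdges.1 h₀out
  have hb₀ : b ∈ h₀ := by
    have : w ∈ e.erase v := mem_erase.2 ⟨ne_of_mem_of_not_mem hw₀ hv₀, hwe⟩
    rw [heab, mem_insert, mem_singleton] at this
    rcases this with rfl | rfl
    exacts [absurd hw₀ ha₀, hw₀]
  obtain ⟨y, hy₀, hyN, hyb⟩ := exists_mem_N1_ne_of_mem_outerEdges h₀out b
  obtain ⟨hyv, f, hf, hvf, hyf⟩ := mem_N1.1 hyN
  -- otherwise `v z a b y` is a Berge cycle along `g h e h₀ f`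
  have hzf : ∀ h ∈ outerEdgesAt H v e, a ∈ h → ∀ z ∈ h, z ∈ N1 H v → z ≠ a → z ∈ f := by
    intro h hh hah z hz hzN hza
    by_contra hzf
    obtain ⟨hH, hvh, -⟩ := mem_outerEdges.1 (mem_outerEdgesAt.1 hh).1
    obtain ⟨hzv, g, hg, hvg, hzg⟩ := mem_N1.1 hzN
    have hzb : z ≠ b := by
      rintro rfl
      exact hvh (hLin.eq_of_mem_of_mem he hH hab hae.2 hbe.2 hah hz ▸ hve)
    refine hNoC5 (hasBergeCycle_five hUnif ?_ hg hH he h₀H hf hvg hzg hz hah hae.2 hbe.2 hb₀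
      hy₀ hyf hvf (ne_of_mem_of_not_mem' hvg hvh) (ne_of_mem_of_not_mem' hve hvh).symm
      (ne_of_mem_of_not_mem' hve hv₀) (ne_of_mem_of_not_mem' hvf hv₀).symm
      (ne_of_mem_of_not_mem' hzg hzf).symm)
    have hay : a ≠ y := ne_of_mem_of_not_mem hy₀ ha₀ |>.symm
    have hzy : z ≠ y := ne_of_mem_of_not_mem hyf hzf |>.symm
    simp; grind
  calc #{h ∈ outerEdgesAt H v e | a ∈ h}
      ≤ #((f.erase v).erase a) := by
        refine hLin.card_le_of_forall_mem ((filter_subset _ _).trans outerEdgesAt_subset)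
          (notMem_erase a _) (fun h hh => (mem_filter.1 hh).2) fun h hh => ?_
        obtain ⟨hh, hah⟩ := mem_filter.1 hh
        obtain ⟨z, hz, hzN, hza⟩ :=
          exists_mem_N1_ne_of_mem_outerEdges (mem_outerEdgesAt.1 hh).1 a
        exact ⟨z, mem_erase.2 ⟨hza, mem_erase.2 ⟨(mem_N1.1 hzN).1, hzf h hh hah z hz hzN hza⟩⟩, hz⟩
    _ ≤ #(f.erase v) := card_erase_le
    _ = 2 := by rw [card_erase_of_mem hvf, hUnif f hf]

theorem exists_mem_forall_mem_outerEdgesAt (hUnif : ∀ e ∈ H, #e = 3) (hLin : IsLinear H)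
    (hNoC5 : ¬ HasBergeCycle H 5) (he : e ∈ H) (hve : v ∈ e)
    (hbig : 6 ≤ #(outerEdgesAt H v e)) : ∃ c ∈ e, c ≠ v ∧ ∀ h ∈ outerEdgesAt H v e, c ∈ h := by
  obtain ⟨a, b, hab, heab⟩ :=
    card_eq_two.1 (by rw [card_erase_of_mem hve, hUnif e he] : #(e.erase v) = 2)
  have hae : a ≠ v ∧ a ∈ e := mem_erase.1 (by simp [heab])
  have hbe : b ≠ v ∧ b ∈ e := mem_erase.1 (by simp [heab])
  by_contra! hnone
  obtain ⟨h₁, h₁mem, hb₁⟩ := hnone b hbe.2 hbe.1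
  obtain ⟨h₂, h₂mem, ha₂⟩ := hnone a hae.2 hae.1
  have hcover : outerEdgesAt H v e ⊆
      {h ∈ outerEdgesAt H v e | a ∈ h} ∪ {h ∈ outerEdgesAt H v e | b ∈ h} := by
    intro h hh
    obtain ⟨hout, w, hwe, hwh⟩ := mem_outerEdgesAt.1 hh
    have : w ∈ e.erase v :=
      mem_erase.2 ⟨ne_of_mem_of_not_mem hwh (mem_outerEdges.1 hout).2.1, hwe⟩
    rw [heab, mem_insert, mem_singleton] at this
    rcases this with rfl | rfl <;> simp [hh, hwh]
  have ha := card_filter_mem_outerEdgesAt_le_two hUnif hLin hNoC5 he hve hab heab h₂mem ha₂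
  have hb := card_filter_mem_outerEdgesAt_le_two hUnif hLin hNoC5 he hve hab.symm
    (heab.trans (pair_comm a b)) h₁mem hb₁
  have := (card_le_card hcover).trans (card_union_le _ _)
  omega

theorem exists_mem_outerEdgesAt_not_mem (hLin : IsLinear H) {c : V}
    (hc : ∀ h ∈ outerEdgesAt H v e, c ∈ h) (hbig : 6 ≤ #(outerEdgesAt H v e))
    (h : Finset V) {T : Finset V} (hT : #T ≤ 4) :
    ∃ g ∈ outerEdgesAt H v e, g ≠ h ∧ ∃ z ∈ g, z ∈ N1 H v ∧ z ≠ c ∧ z ∉ T := by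
  by_contra! hall
  have : #((outerEdgesAt H v e).erase h) ≤ #(T.erase c) := by
    refine hLin.card_le_of_forall_mem ((erase_subset _ _).trans outerEdgesAt_subset)
      (notMem_erase c T) (fun g hg => hc g (mem_of_mem_erase hg)) fun g hg => ?_
    obtain ⟨hgh, hg⟩ := mem_erase.1 hg
    obtain ⟨z, hz, hzN, hzc⟩ := exists_mem_N1_ne_of_mem_outerEdges (mem_outerEdgesAt.1 hg).1 c
    exact ⟨z, mem_erase.2 ⟨hzc, hall g hg hgh z hz hzN hzc⟩, hz⟩
  have := pred_card_le_card_erase (s := outerEdgesAt H v e) (a := h)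
  have := card_erase_le (s := T) (a := c)
  omega

end

theorem card_outerEdgesAt_lt_six_or (hUnif : ∀ e ∈ H, #e = 3) (hLin : IsLinear H)
    (hNoC5 : ¬ HasBergeCycle H 5) {v : V} {e₁ e₂ : Finset V} (he₁ : e₁ ∈ H) (hv₁ : v ∈ e₁)
    (he₂ : e₂ ∈ H) (hv₂ : v ∈ e₂) (hne : e₁ ≠ e₂) {h : Finset V}
    (hh₁ : h ∈ outerEdgesAt H v e₁) (hh₂ : h ∈ outerEdgesAt H v e₂) :
    #(outerEdgesAt H v e₁) < 6 ∨ #(outerEdgesAt H v e₂) < 6 := by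
  by_contra! ⟨hb₁, hb₂⟩
  obtain ⟨c₁, hc₁e, hc₁v, hc₁⟩ := exists_mem_forall_mem_outerEdgesAt hUnif hLin hNoC5 he₁ hv₁ hb₁
  obtain ⟨c₂, hc₂e, hc₂v, hc₂⟩ := exists_mem_forall_mem_outerEdgesAt hUnif hLin hNoC5 he₂ hv₂ hb₂
  have hc₁₂ : c₁ ≠ c₂ := by
    rintro rfl
    exact hne (hLin.eq_of_mem_of_mem he₁ he₂ hc₁v.symm hv₁ hc₁e hv₂ hc₂e)
  have hcard (f : Finset V) (hf : f ∈ H) (hvf : v ∈ f) : #(f.erase v) = 2 := by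
    rw [card_erase_of_mem hvf, hUnif f hf]
  obtain ⟨g₁, hg₁, hg₁h, x, hxg₁, hxN, hxc₁, hxT⟩ :=
    exists_mem_outerEdgesAt_not_mem hLin hc₁ hb₁ h (T := e₂.erase v)
      (by rw [hcard e₂ he₂ hv₂]; omega)
  obtain ⟨hxv, f₁, hf₁, hvf₁, hxf₁⟩ := mem_N1.1 hxN
  obtain ⟨g₂, hg₂, hg₂h, y, hyg₂, hyN, hyc₂, hyT⟩ :=
    exists_mem_outerEdgesAt_not_mem hLin hc₂ hb₂ h (T := e₁.erase v ∪ f₁.erase v)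
      ((card_union_le _ _).trans (by rw [hcard e₁ he₁ hv₁, hcard f₁ hf₁ hvf₁]))
  obtain ⟨hyv, f₂, hf₂, hvf₂, hyf₂⟩ := mem_N1.1 hyN
  simp only [mem_union, mem_erase, hxv, hyv, ne_eq, not_false_eq_true, true_and, not_or]
    at hxT hyT
  obtain ⟨hyne₁, hynf₁⟩ := hyT
  obtain ⟨hg₁H, hvg₁, -⟩ := mem_outerEdges.1 (mem_outerEdgesAt.1 hg₁).1
  obtain ⟨hg₂H, hvg₂, -⟩ := mem_outerEdges.1 (mem_outerEdgesAt.1 hg₂).1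
  obtain ⟨hH, -, -⟩ := mem_outerEdges.1 (mem_outerEdgesAt.1 hh₁).1
  -- the Berge cycle `v x c₁ c₂ y` along `f₁ g₁ h g₂ f₂`
  refine hNoC5 (hasBergeCycle_five hUnif ?_ hf₁ hg₁H hH hg₂H hf₂ hvf₁ hxf₁ hxg₁ (hc₁ g₁ hg₁)
    (hc₁ h hh₁) (hc₂ h hh₂) (hc₂ g₂ hg₂) hyg₂ hyf₂ hvf₂ (ne_of_mem_of_not_mem' hvf₁ hvg₁)
    hg₁h hg₂h.symm (ne_of_mem_of_not_mem' hvf₂ hvg₂).symm (ne_of_mem_of_not_mem' hyf₂ hynf₁))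
  have hxc₂ : x ≠ c₂ := ne_of_mem_of_not_mem hc₂e hxT |>.symm
  have hxy : x ≠ y := ne_of_mem_of_not_mem hxf₁ hynf₁
  have hc₁y : c₁ ≠ y := ne_of_mem_of_not_mem hc₁e hyne₁
  simp; grind

theorem card_outerEdges_le (hUnif : ∀ e ∈ H, #e = 3) (hLin : IsLinear H)
    (hNoC5 : ¬ HasBergeCycle H 5) (v : V) : #(outerEdges H v) ≤ 5 * hyperDeg H v := by
  set small := (H.filter fun e => v ∈ e).filter fun e => #(outerEdgesAt H v e) < 6
  have hcover : outerEdges H v ⊆ small.biUnion (outerEdgesAt H v) := by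
    intro h hh
    obtain ⟨hH, hvh, h2⟩ := mem_outerEdges.1 hh
    obtain ⟨x, hx, y, hy, hxy⟩ := one_lt_card.1 (by omega : 1 < #(h ∩ N1 H v))
    rw [mem_inter] at hx hy
    obtain ⟨-, f₁, hf₁, hvf₁, hxf₁⟩ := mem_N1.1 hx.2
    obtain ⟨-, f₂, hf₂, hvf₂, hyf₂⟩ := mem_N1.1 hy.2
    have hf₁₂ : f₁ ≠ f₂ := by
      rintro rfl
      exact hvh (hLin.eq_of_mem_of_mem hf₁ hH hxy hxf₁ hyf₂ hx.1 hy.1 ▸ hvf₁)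
    have hh₁ : h ∈ outerEdgesAt H v f₁ := mem_outerEdgesAt.2 ⟨hh, x, hxf₁, hx.1⟩
    have hh₂ : h ∈ outerEdgesAt H v f₂ := mem_outerEdgesAt.2 ⟨hh, y, hyf₂, hy.1⟩
    simp only [small, mem_biUnion, mem_filter]
    rcases card_outerEdgesAt_lt_six_or hUnif hLin hNoC5 hf₁ hvf₁ hf₂ hvf₂ hf₁₂ hh₁ hh₂ with h6 | h6
    exacts [⟨f₁, ⟨⟨hf₁, hvf₁⟩, h6⟩, hh₁⟩, ⟨f₂, ⟨⟨hf₂, hvf₂⟩, h6⟩, hh₂⟩]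
  calc #(outerEdges H v)
      ≤ #small * 5 := (card_le_card hcover).trans <|
        card_biUnion_le_card_mul _ _ _ fun e he => Nat.le_of_lt_succ (mem_filter.1 he).2
    _ ≤ 5 * hyperDeg H v := by rw [mul_comm]; exact Nat.mul_le_mul_left 5 (card_filter_le _ _)

end

theorem stmt_0_general {V : Type*} [DecidableEq V]
    (H : Finset (Finset V))
    (hUnif : ∀ e ∈ H, e.card = 3)
    (hLin : IsLinear H)
    (hNoC5 : ¬ HasBergeCycle H 5)
    (v : V) :
    (H.filter fun h => 2 ≤ (h ∩ N1 H v).card).card ≤ 6 * hyperDeg H v := by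
  set counted := H.filter fun h => 2 ≤ #(h ∩ N1 H v)
  have hthrough : #(counted.filter fun h => v ∈ h) ≤ hyperDeg H v :=
    card_le_card (filter_subset_filter _ (filter_subset _ _))
  have hout : counted.filter (fun h => v ∉ h) = outerEdges H v := by
    ext h
    simp only [counted, mem_filter, mem_outerEdges]
    tauto
  have hsplit := card_filter_add_card_filter_not (s := counted) (fun h => v ∈ h)
  rw [hout] at hsplit
  have := card_outerEdges_le hUnif hLin hNoC5 v
  omega

theorem stmt_0 {V : Type*} [Fintype V] [DecidableEq V]
    (H : Finset (Finset V))
    (hUnif : ∀ e ∈ H, e.card = 3)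
    (hLin : IsLinear H)
    (hNoC5 : ¬ HasBergeCycle H 5)
    (v : V) :
    (H.filter fun h => 2 ≤ (h ∩ N1 H v).card).card ≤ 6 * hyperDeg H v :=
  stmt_0_general H hUnif hLin hNoC5 v
end

section
/- Let H be a 3-uniform linear hypergraph containing no Berge cycle of length 5 and let v be a vertex of H. Then |N₂(v)| ≥ (∑_{x ∈ N₁(v)} d(x)) − 18·d(v), where N₁(v) is the first neighborhood of v and N₂(v) is the second neighborhood of v. -/
/-!
Write `∑_{x ∈ N₁(v)} d(x) = ∑_e |e ∩ N₁(v)|`. Edges through `v` contribute at most `2` each.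
The engine for the other edges: two vertices of `N₁(v)` joined by a Berge path of length three
avoiding `v` lie on a common edge through `v`, since otherwise the path closes a Berge `C₅`.

An edge avoiding `v` and meeting `N₁(v)` once (a single edge) has its two other vertices in
`N₂(v)`, so single edges form a graph on `N₂(v)`. A single edge with an endpoint lying on no other
single edge is charged to that endpoint; by the path argument, every vertex of `N₂(v)` lies on at
most two of the remaining single edges, so there are at most `|N₂(v)|` single edges.

For edges avoiding `v` and meeting `N₁(v)` at least twice (multi edges), the path argument shows
that a vertex of `N₁(v)` on four or more of them leaves the other `N₁`-vertices of those edges on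
no further multi edge; charging accordingly, their incidences with `N₁(v)` number at most
`4 |N₁(v)| ≤ 8 d(v)`. Altogether the sum is at most `|N₂(v)| + 10 d(v)`.
-/

open Finset

/-- Second neighborhood: vertices outside `N1 H v ∪ {v}` lying in a hyperedge
that meets `N1 H v`. -/
def N2 {V : Type*} [DecidableEq V] (H : Finset (Finset V)) (v : V) : Finset V :=
  ((H.filter fun e => (e ∩ N1 H v).Nonempty).biUnion id) \ insert v (N1 H v)

section

variable {V : Type*} [DecidableEq V] {H : Finset (Finset V)} {v : V}

theorem IsLinear.eq_of_mem_of_mem_s1 (hLin : IsLinear H) {e f : Finset V} {a b : V}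
    (he : e ∈ H) (hf : f ∈ H) (hab : a ≠ b)
    (hae : a ∈ e) (hbe : b ∈ e) (haf : a ∈ f) (hbf : b ∈ f) : e = f := by
  by_contra hef
  have : 1 < #(e ∩ f) := one_lt_card.mpr ⟨a, by simp [hae, haf], b, by simp [hbe, hbf], hab⟩
  exact absurd (hLin e he f hf hef) (not_le.mpr this)

theorem mem_N1_iff {x : V} : x ∈ N1 H v ↔ x ≠ v ∧ ∃ e ∈ H, v ∈ e ∧ x ∈ e := by
  simp [N1, and_assoc]

theorem ne_of_mem_N1 {x : V} (hx : x ∈ N1 H v) : x ≠ v := (mem_N1_iff.mp hx).1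

theorem mem_N2_of_mem {e : Finset V} {x u : V} (he : e ∈ H) (hx : x ∈ N1 H v ∩ e)
    (hu : u ∈ e) (huv : u ≠ v) (huN : u ∉ N1 H v) : u ∈ N2 H v := by
  simp only [N2, mem_sdiff, mem_biUnion, mem_filter, mem_insert, id]
  exact ⟨⟨e, ⟨he, x, by rw [inter_comm]; exact hx⟩, hu⟩, by tauto⟩

theorem notMem_N1_of_mem_N2 {u : V} (hu : u ∈ N2 H v) : u ∉ N1 H v :=
  fun h => (mem_sdiff.mp hu).2 (mem_insert_of_mem h)

theorem ne_of_mem_N1_of_mem_N2 {x u : V} (hx : x ∈ N1 H v) (hu : u ∈ N2 H v) : x ≠ u :=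
  ne_of_mem_of_not_mem hx (notMem_N1_of_mem_N2 hu)

theorem card_N1_le (hUnif : ∀ e ∈ H, e.card = 3) : #(N1 H v) ≤ 2 * hyperDeg H v := by
  have hsub : N1 H v ⊆ {e ∈ H | v ∈ e}.biUnion (·.erase v) := by
    intro x hx
    obtain ⟨hxv, e, he, hve, hxe⟩ := mem_N1_iff.mp hx
    exact mem_biUnion.mpr ⟨e, mem_filter.mpr ⟨he, hve⟩, mem_erase.mpr ⟨hxv, hxe⟩⟩
  refine (card_le_card hsub).trans ((card_biUnion_le_card_mul _ _ 2 ?_).trans_eq (mul_comm _ _))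
  intro e he
  rw [mem_filter] at he
  rw [card_erase_of_mem he.2, hUnif e he.1]

theorem sum_hyperDeg_eq_sum_card_inter (A : Finset V) (E : Finset (Finset V)) :
    ∑ x ∈ A, hyperDeg E x = ∑ e ∈ E, #(A ∩ e) := by
  simp_rw [hyperDeg, ← filter_mem_eq_inter, card_eq_sum_ones, sum_filter]
  exact sum_comm

noncomputable def starEdge (H : Finset (Finset V)) (v x : V) : Finset V :=
  Classical.epsilon fun e => e ∈ H ∧ v ∈ e ∧ x ∈ e

theorem starEdge_spec {x : V} (hx : x ∈ N1 H v) :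
    starEdge H v x ∈ H ∧ v ∈ starEdge H v x ∧ x ∈ starEdge H v x :=
  Classical.epsilon_spec (p := fun e => e ∈ H ∧ v ∈ e ∧ x ∈ e) (mem_N1_iff.mp hx).2

/-- Otherwise `v, x, a, b, y` with the edges `starEdge H v x, e₁, e₂, e₃, starEdge H v y`
form a Berge `C₅`. -/
theorem starEdge_eq_of_bergePath (hLin : IsLinear H) (hC5 : ¬ HasBergeCycle H 5)
    {x a b y : V} {e₁ e₂ e₃ : Finset V} (hx : x ∈ N1 H v) (hy : y ∈ N1 H v)
    (he₁ : e₁ ∈ H) (he₂ : e₂ ∈ H) (he₃ : e₃ ∈ H) (hv₁ : v ∉ e₁) (hv₂ : v ∉ e₂) (hv₃ : v ∉ e₃)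
    (hxa : x ≠ a) (hab : a ≠ b) (hby : b ≠ y) (h₁₂ : e₁ ≠ e₂) (h₂₃ : e₂ ≠ e₃)
    (hx₁ : x ∈ e₁) (ha₁ : a ∈ e₁) (ha₂ : a ∈ e₂) (hb₂ : b ∈ e₂) (hb₃ : b ∈ e₃) (hy₃ : y ∈ e₃) :
    starEdge H v x = starEdge H v y := by
  by_contra hxy
  obtain ⟨hsx, hvx, hxx⟩ := starEdge_spec hx
  obtain ⟨hsy, hvy, hyy⟩ := starEdge_spec hy
  have hvx' : v ≠ x := (ne_of_mem_N1 hx).symm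
  have hvy' : v ≠ y := (ne_of_mem_N1 hy).symm
  have hva : v ≠ a := fun h => hv₁ (h ▸ ha₁)
  have hvb : v ≠ b := fun h => hv₂ (h ▸ hb₂)
  have hxb : x ≠ b := fun h => h₁₂ (hLin.eq_of_mem_of_mem_s1 he₁ he₂ hxa hx₁ ha₁ (h ▸ hb₂) ha₂)
  have hay : a ≠ y := fun h => h₂₃ (hLin.eq_of_mem_of_mem_s1 he₂ he₃ hby hb₂ (h ▸ ha₂) hb₃ hy₃)
  have hxy' : x ≠ y := fun h => hxy (h ▸ rfl)
  have h₁₃ : e₁ ≠ e₃ := fun h => h₁₂ (hLin.eq_of_mem_of_mem_s1 he₁ he₂ hab ha₁ (h ▸ hb₃) ha₂ hb₂)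
  have hx₁' : starEdge H v x ≠ e₁ := fun h => hv₁ (h ▸ hvx)
  have hx₂' : starEdge H v x ≠ e₂ := fun h => hv₂ (h ▸ hvx)
  have hx₃' : starEdge H v x ≠ e₃ := fun h => hv₃ (h ▸ hvx)
  have hy₁' : e₁ ≠ starEdge H v y := fun h => hv₁ (h ▸ hvy)
  have hy₂' : e₂ ≠ starEdge H v y := fun h => hv₂ (h ▸ hvy)
  have hy₃' : e₃ ≠ starEdge H v y := fun h => hv₃ (h ▸ hvy)
  -- `ZMod 5` is `Fin 5` by definition, so the cycle can be given by vector notation.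
  refine hC5 ⟨![v, x, a, b, y], ![starEdge H v x, e₁, e₂, e₃, starEdge H v y], ?_, ?_, ?_⟩
  · show Function.Injective (![v, x, a, b, y] : Fin 5 → V)
    simp [Function.Injective, Fin.forall_fin_succ, *, Ne.symm]
  · show Function.Injective (![starEdge H v x, e₁, e₂, e₃, starEdge H v y] : Fin 5 → Finset V)
    simp [Function.Injective, Fin.forall_fin_succ, *, Ne.symm]
  · show ∀ i : Fin 5, _
    intro i
    fin_cases i
    exacts [⟨hsx, hvx, hxx⟩, ⟨he₁, hx₁, ha₁⟩, ⟨he₂, ha₂, hb₂⟩, ⟨he₃, hb₃, hy₃⟩, ⟨hsy, hyy, hvy⟩]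

/-- Distinct edges of `F` meet `(starEdge H v y).erase v`, a set of two vertices, in distinct
vertices: two edges through `u` sharing a further vertex coincide by linearity. -/
theorem card_le_two_of_forall_starEdge_eq (hUnif : ∀ e ∈ H, e.card = 3) (hLin : IsLinear H)
    {F : Finset (Finset V)} (hF : F ⊆ H) {u y : V} (hy : y ∈ N1 H v)
    (h : ∀ f ∈ F, u ∈ f ∧ ∃ x ∈ N1 H v ∩ f, x ≠ u ∧ starEdge H v x = starEdge H v y) :
    #F ≤ 2 := by
  obtain ⟨hs, hv, -⟩ := starEdge_spec hy
  calc #F ≤ #((starEdge H v y).erase v) := ?_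
    _ = 2 := by rw [card_erase_of_mem hv, hUnif _ hs]
  refine card_le_card_of_forall_subsingleton (fun f x => x ∈ f ∧ x ≠ u) (fun f hf => ?_)
    (fun x _ f hf f' hf' => ?_)
  · obtain ⟨-, x, hx, hxu, hxy⟩ := h f hf
    exact ⟨x, mem_erase.mpr ⟨ne_of_mem_N1 (mem_inter.mp hx).1,
      hxy ▸ (starEdge_spec (mem_inter.mp hx).1).2.2⟩, (mem_inter.mp hx).2, hxu⟩
  · exact hLin.eq_of_mem_of_mem_s1 (hF hf.1) (hF hf'.1) hf.2.2 hf.2.1 (h f hf.1).1 hf'.2.1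
      (h f' hf'.1).1

def singleEdges (H : Finset (Finset V)) (v : V) : Finset (Finset V) :=
  {e ∈ H | v ∉ e ∧ #(N1 H v ∩ e) = 1}

theorem singleEdges_subset : singleEdges H v ⊆ H := filter_subset _ _

def coreEdges (H : Finset (Finset V)) (v : V) : Finset (Finset V) :=
  {e ∈ singleEdges H v | ∀ u ∈ N2 H v ∩ e, 2 ≤ hyperDeg (singleEdges H v) u}

theorem coreEdges_subset : coreEdges H v ⊆ singleEdges H v := filter_subset _ _

theorem exists_N1_inter_eq_singleton {e : Finset V} (he : e ∈ singleEdges H v) :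
    ∃ x, N1 H v ∩ e = {x} :=
  card_eq_one.mp (mem_filter.mp he).2.2

theorem N2_inter_eq_erase {e : Finset V} {x : V} (he : e ∈ singleEdges H v)
    (hx : N1 H v ∩ e = {x}) : N2 H v ∩ e = e.erase x := by
  have hxe : x ∈ N1 H v ∩ e := hx ▸ mem_singleton_self x
  rw [singleEdges, mem_filter] at he
  ext u
  simp only [mem_inter, mem_erase]
  constructor
  · rintro ⟨hu, hue⟩
    exact ⟨fun h => notMem_N1_of_mem_N2 hu (h ▸ (mem_inter.mp hxe).1), hue⟩
  · rintro ⟨hux, hue⟩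
    have huN : u ∉ N1 H v := fun h => hux (mem_singleton.mp (hx ▸ mem_inter.mpr ⟨h, hue⟩))
    exact ⟨mem_N2_of_mem he.1 hxe hue (fun h => he.2.1 (h ▸ hue)) huN, hue⟩

theorem card_N2_inter_of_mem_singleEdges (hUnif : ∀ e ∈ H, e.card = 3) {e : Finset V}
    (he : e ∈ singleEdges H v) : #(N2 H v ∩ e) = 2 := by
  obtain ⟨x, hx⟩ := exists_N1_inter_eq_singleton he
  have hxe : x ∈ e := (mem_inter.mp (hx ▸ mem_singleton_self x)).2
  rw [N2_inter_eq_erase he hx, card_erase_of_mem hxe, hUnif e (mem_filter.mp he).1]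

/-- The other `N2`-vertex `w` of `f` lies on a second single edge `g ∋ y`, and the Berge path
`x, f', u, f, w, g, y` puts `x` on the edge through `v` and `y`. -/
theorem exists_starEdge_eq_of_mem_coreEdges (hUnif : ∀ e ∈ H, e.card = 3) (hLin : IsLinear H)
    (hC5 : ¬ HasBergeCycle H 5) {f : Finset V} {u : V} (hf : f ∈ coreEdges H v)
    (hu : u ∈ N2 H v ∩ f) :
    ∃ y ∈ N1 H v, ∀ f' ∈ singleEdges H v, f' ≠ f → u ∈ f' →
      ∀ x ∈ N1 H v ∩ f', starEdge H v x = starEdge H v y := by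
  rw [coreEdges, mem_filter] at hf
  obtain ⟨w, hw, hwu⟩ := exists_mem_ne
    (by rw [card_N2_inter_of_mem_singleEdges hUnif hf.1]; omega) u
  obtain ⟨g, hg, hgf⟩ := exists_mem_ne (hf.2 w hw) f
  rw [mem_filter] at hg
  obtain ⟨y, hy⟩ := exists_N1_inter_eq_singleton hg.1
  obtain ⟨hyN, hyg⟩ := mem_inter.mp (hy ▸ mem_singleton_self y)
  obtain ⟨huN2, huf⟩ := mem_inter.mp hu
  obtain ⟨hwN2, hwf⟩ := mem_inter.mp hw
  refine ⟨y, hyN, fun f' hf' hf'f huf' x hx => ?_⟩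
  obtain ⟨hxN, hxf'⟩ := mem_inter.mp hx
  simp only [singleEdges, mem_filter] at hf' hg hf
  exact starEdge_eq_of_bergePath hLin hC5 hxN hyN hf'.1 hf.1.1 hg.1.1 hf'.2.1 hf.1.2.1 hg.1.2.1
    (ne_of_mem_N1_of_mem_N2 hxN huN2) hwu.symm (ne_of_mem_N1_of_mem_N2 hyN hwN2).symm hf'f
    (Ne.symm hgf) hxf' huf' huf hwf hg.2 hyg

theorem hyperDeg_coreEdges_le_two (hUnif : ∀ e ∈ H, e.card = 3) (hLin : IsLinear H)
    (hC5 : ¬ HasBergeCycle H 5) {u : V} (hu : u ∈ N2 H v) :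
    hyperDeg (coreEdges H v) u ≤ 2 := by
  by_contra! h
  obtain ⟨f₁, hf₁, f₂, hf₂, f₃, hf₃, h₁₂, h₁₃, h₂₃⟩ := two_lt_card.mp h
  have hN1 : ∀ f ∈ {f ∈ coreEdges H v | u ∈ f}, ∃ x ∈ N1 H v ∩ f, x ≠ u := fun f hf =>
    have ⟨x, hx⟩ := exists_N1_inter_eq_singleton (coreEdges_subset (mem_filter.mp hf).1)
    have hx' : x ∈ N1 H v ∩ f := hx ▸ mem_singleton_self x
    ⟨x, hx', ne_of_mem_N1_of_mem_N2 (mem_inter.mp hx').1 hu⟩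
  rw [mem_filter] at hf₁ hf₂ hf₃
  obtain ⟨y₁, hy₁, hfy₁⟩ := exists_starEdge_eq_of_mem_coreEdges hUnif hLin hC5 hf₁.1
    (mem_inter.mpr ⟨hu, hf₁.2⟩)
  obtain ⟨y₂, -, hfy₂⟩ := exists_starEdge_eq_of_mem_coreEdges hUnif hLin hC5 hf₂.1
    (mem_inter.mpr ⟨hu, hf₂.2⟩)
  have hy₂₁ : starEdge H v y₂ = starEdge H v y₁ := by
    obtain ⟨x₃, hx₃, -⟩ := hN1 f₃ (mem_filter.mpr hf₃)
    rw [← hfy₁ f₃ (coreEdges_subset hf₃.1) h₁₃.symm hf₃.2 x₃ hx₃,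
      hfy₂ f₃ (coreEdges_subset hf₃.1) h₂₃.symm hf₃.2 x₃ hx₃]
  refine h.not_ge (card_le_two_of_forall_starEdge_eq (u := u) hUnif hLin
    ((filter_subset _ _).trans (coreEdges_subset.trans singleEdges_subset)) hy₁ fun f hf => ?_)
  obtain ⟨x, hx, hxu⟩ := hN1 f hf
  rw [mem_filter] at hf
  refine ⟨hf.2, x, hx, hxu, ?_⟩
  by_cases hff₁ : f = f₁
  · subst hff₁
    rw [hfy₂ f (coreEdges_subset hf.1) h₁₂ hf.2 x hx, hy₂₁]
  · exact hfy₁ f (coreEdges_subset hf.1) hff₁ hf.2 x hx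

theorem card_singleEdges_le (hUnif : ∀ e ∈ H, e.card = 3) (hLin : IsLinear H)
    (hC5 : ¬ HasBergeCycle H 5) : #(singleEdges H v) ≤ #(N2 H v) := by
  set P := {u ∈ N2 H v | hyperDeg (singleEdges H v) u ≤ 1}
  set C := {u ∈ N2 H v | ¬ hyperDeg (singleEdges H v) u ≤ 1}
  have hpendant : #(singleEdges H v \ coreEdges H v) ≤ #P := by
    refine card_le_card_of_forall_subsingleton (fun e u => u ∈ e) (fun e he => ?_)
      (fun u hu e he e' he' => ?_)
    · rw [mem_sdiff, coreEdges, mem_filter] at he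
      push Not at he
      obtain ⟨u, hu, hlt⟩ := he.2 he.1
      have : 0 < hyperDeg (singleEdges H v) u :=
        card_pos.mpr ⟨e, mem_filter.mpr ⟨he.1, (mem_inter.mp hu).2⟩⟩
      exact ⟨u, mem_filter.mpr ⟨(mem_inter.mp hu).1, by omega⟩, (mem_inter.mp hu).2⟩
    · exact card_le_one.mp (mem_filter.mp hu).2 e (mem_filter.mpr ⟨(mem_sdiff.mp he.1).1, he.2⟩)
        e' (mem_filter.mpr ⟨(mem_sdiff.mp he'.1).1, he'.2⟩)
  have hcore : #(coreEdges H v) * 2 ≤ #C * 2 := by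
    calc #(coreEdges H v) * 2 ≤ ∑ e ∈ coreEdges H v, #(C ∩ e) := by
          rw [← smul_eq_mul]
          refine card_nsmul_le_sum _ _ _ fun e he => ?_
          rw [coreEdges, mem_filter] at he
          rw [← card_N2_inter_of_mem_singleEdges hUnif he.1]
          refine card_le_card fun u hu => mem_inter.mpr ⟨mem_filter.mpr ⟨(mem_inter.mp hu).1, ?_⟩,
            (mem_inter.mp hu).2⟩
          have := he.2 u hu
          omega
      _ ≤ #C * 2 := sum_card_inter_le fun u hu =>
          hyperDeg_coreEdges_le_two hUnif hLin hC5 (mem_filter.mp hu).1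
  have hPC : #P + #C = #(N2 H v) := card_filter_add_card_filter_not _
  have hT : #(singleEdges H v \ coreEdges H v) + #(coreEdges H v) = #(singleEdges H v) :=
    card_sdiff_add_card_eq_card coreEdges_subset
  omega

def multiEdges (H : Finset (Finset V)) (v : V) : Finset (Finset V) :=
  {e ∈ H | v ∉ e ∧ 2 ≤ #(N1 H v ∩ e)}

theorem multiEdges_subset : multiEdges H v ⊆ H := filter_subset _ _

/-- Each multi edge `e'` through `w` other than `e` has a further `N1`-vertex `s`, and the Berge
path `s, e', w, e, y, f, g` forces `s` onto the edge through `v` and `g`; so there are at most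
two such `e'`. -/
theorem hyperDeg_multiEdges_le_one_of_four_le (hUnif : ∀ e ∈ H, e.card = 3)
    (hLin : IsLinear H) (hC5 : ¬ HasBergeCycle H 5) {e : Finset V} {w y : V}
    (he : e ∈ multiEdges H v) (hw : w ∈ N1 H v ∩ e) (hy : y ∈ N1 H v ∩ e) (hwy : w ≠ y)
    (hw4 : 4 ≤ hyperDeg (multiEdges H v) w) : hyperDeg (multiEdges H v) y ≤ 1 := by
  by_contra! hy2
  obtain ⟨f, hf, hfe⟩ := exists_mem_ne hy2 e
  rw [mem_filter] at hf
  have hMe := mem_filter.mp he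
  have hMf := mem_filter.mp hf.1
  obtain ⟨g, hg, hgy⟩ := exists_mem_ne hMf.2.2 y
  have hstar : ∀ e' ∈ multiEdges H v, w ∈ e' → e' ≠ e →
      ∃ s ∈ N1 H v ∩ e', s ≠ w ∧ starEdge H v s = starEdge H v g := by
    intro e' he' hwe' he'e
    have hM' := mem_filter.mp he'
    obtain ⟨s, hs, hsw⟩ := exists_mem_ne hM'.2.2 w
    exact ⟨s, hs, hsw, starEdge_eq_of_bergePath hLin hC5 (mem_inter.mp hs).1 (mem_inter.mp hg).1
      hM'.1 hMe.1 hMf.1 hM'.2.1 hMe.2.1 hMf.2.1 hsw hwy hgy.symm he'e (Ne.symm hfe)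
      (mem_inter.mp hs).2 hwe' (mem_inter.mp hw).2 (mem_inter.mp hy).2 hf.2 (mem_inter.mp hg).2⟩
  have h3 : 2 < #({e' ∈ multiEdges H v | w ∈ e'}.erase e) := by
    rw [card_erase_of_mem (mem_filter.mpr ⟨he, (mem_inter.mp hw).2⟩)]
    exact Nat.lt_sub_of_add_lt hw4
  refine h3.not_ge (card_le_two_of_forall_starEdge_eq (u := w) hUnif hLin
    ((erase_subset _ _).trans ((filter_subset _ _).trans multiEdges_subset))
    (mem_inter.mp hg).1 fun e' he' => ?_)
  simp only [mem_erase, mem_filter] at he'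
  exact ⟨he'.2.2, hstar e' he'.2.1 he'.2.2 he'.1⟩

theorem card_inter_le_card_inter_of_mem_multiEdges (hUnif : ∀ e ∈ H, e.card = 3)
    (hLin : IsLinear H) (hC5 : ¬ HasBergeCycle H 5) {e : Finset V} (he : e ∈ multiEdges H v) :
    #({w ∈ N1 H v | 4 ≤ hyperDeg (multiEdges H v) w} ∩ e) ≤
      #({w ∈ N1 H v | hyperDeg (multiEdges H v) w ≤ 1} ∩ e) := by
  rcases ({w ∈ N1 H v | 4 ≤ hyperDeg (multiEdges H v) w} ∩ e).eq_empty_or_nonempty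
    with h | ⟨w, hw⟩
  · simp [h]
  simp only [mem_inter, mem_filter] at hw
  obtain ⟨y, hy, hyw⟩ := exists_mem_ne (mem_filter.mp he).2.2 w
  calc #({w ∈ N1 H v | 4 ≤ hyperDeg (multiEdges H v) w} ∩ e) ≤ 1 := by
        refine card_le_one.mpr fun a ha b hb => by_contra fun hab => ?_
        simp only [mem_inter, mem_filter] at ha hb
        have := hyperDeg_multiEdges_le_one_of_four_le hUnif hLin hC5 he
          (mem_inter.mpr ⟨ha.1.1, ha.2⟩) (mem_inter.mpr ⟨hb.1.1, hb.2⟩) hab ha.1.2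
        omega
    _ ≤ _ := card_pos.mpr ⟨y, mem_inter.mpr ⟨mem_filter.mpr ⟨(mem_inter.mp hy).1,
        hyperDeg_multiEdges_le_one_of_four_le hUnif hLin hC5 he (mem_inter.mpr ⟨hw.1.1, hw.2⟩)
          hy hyw.symm hw.1.2⟩, (mem_inter.mp hy).2⟩⟩

theorem sum_card_N1_inter_multiEdges_le (hUnif : ∀ e ∈ H, e.card = 3) (hLin : IsLinear H)
    (hC5 : ¬ HasBergeCycle H 5) : ∑ e ∈ multiEdges H v, #(N1 H v ∩ e) ≤ 4 * #(N1 H v) := by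
  set M := multiEdges H v
  set high := {w ∈ N1 H v | 4 ≤ hyperDeg M w}
  set low := {w ∈ N1 H v | ¬ 4 ≤ hyperDeg M w}
  set lone := {w ∈ N1 H v | hyperDeg M w ≤ 1}
  have hlone : #lone ≤ #low := card_le_card (monotone_filter_right _ fun w h => by omega)
  calc ∑ e ∈ M, #(N1 H v ∩ e) = ∑ e ∈ M, (#(high ∩ e) + #(low ∩ e)) :=
        sum_congr rfl fun e _ => by rw [filter_inter, filter_inter, card_filter_add_card_filter_not]
    _ ≤ ∑ e ∈ M, (#(lone ∩ e) + #(low ∩ e)) := sum_le_sum fun e he =>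
        Nat.add_le_add_right (card_inter_le_card_inter_of_mem_multiEdges hUnif hLin hC5 he) _
    _ = ∑ e ∈ M, #(lone ∩ e) + ∑ e ∈ M, #(low ∩ e) := sum_add_distrib
    _ ≤ #lone * 1 + #low * 3 := add_le_add (sum_card_inter_le fun w hw => (mem_filter.mp hw).2)
        (sum_card_inter_le fun w hw => (by have := (mem_filter.mp hw).2; omega : hyperDeg M w ≤ 3))
    _ ≤ 4 * #(N1 H v) := by have : #low ≤ #(N1 H v) := card_filter_le _ _; omega

theorem card_N1_inter_le (hUnif : ∀ e ∈ H, e.card = 3) {e : Finset V} (he : e ∈ H) :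
    #(N1 H v ∩ e) ≤ (if v ∈ e then 2 else 0) + (if e ∈ singleEdges H v then 1 else 0) +
      (if e ∈ multiEdges H v then #(N1 H v ∩ e) else 0) := by
  by_cases hve : v ∈ e
  · have : #(N1 H v ∩ e) ≤ #(e.erase v) := card_le_card fun x hx =>
      mem_erase.mpr ⟨ne_of_mem_N1 (mem_inter.mp hx).1, (mem_inter.mp hx).2⟩
    rw [card_erase_of_mem hve, hUnif e he] at this
    simp only [hve, if_true]
    omega
  · simp only [singleEdges, multiEdges, mem_filter, he, hve, not_false_eq_true, true_and]
    split_ifs <;> omega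

theorem sum_hyperDeg_N1_le (hUnif : ∀ e ∈ H, e.card = 3) (hLin : IsLinear H)
    (hC5 : ¬ HasBergeCycle H 5) :
    ∑ x ∈ N1 H v, hyperDeg H x ≤ #(N2 H v) + 10 * hyperDeg H v := by
  calc ∑ x ∈ N1 H v, hyperDeg H x = ∑ e ∈ H, #(N1 H v ∩ e) := sum_hyperDeg_eq_sum_card_inter _ _
    _ ≤ ∑ e ∈ H, ((if v ∈ e then 2 else 0) + (if e ∈ singleEdges H v then 1 else 0) +
          (if e ∈ multiEdges H v then #(N1 H v ∩ e) else 0)) :=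
        sum_le_sum fun e he => card_N1_inter_le hUnif he
    _ = 2 * hyperDeg H v + #(singleEdges H v) + ∑ e ∈ multiEdges H v, #(N1 H v ∩ e) := by
        rw [sum_add_distrib, sum_add_distrib, ← sum_filter, sum_ite_mem, sum_ite_mem,
          inter_eq_right.mpr singleEdges_subset, inter_eq_right.mpr multiEdges_subset,
          sum_const, sum_const, smul_eq_mul, smul_eq_mul, mul_one, mul_comm, hyperDeg]
    _ ≤ 2 * hyperDeg H v + #(N2 H v) + 4 * #(N1 H v) := by
        gcongr
        · exact card_singleEdges_le hUnif hLin hC5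
        · exact sum_card_N1_inter_multiEdges_le hUnif hLin hC5
    _ ≤ #(N2 H v) + 10 * hyperDeg H v := by
        have := card_N1_le (v := v) hUnif
        omega

end

theorem stmt_1_general {V : Type*} [DecidableEq V]
    (H : Finset (Finset V))
    (hUnif : ∀ e ∈ H, e.card = 3)
    (hLin : IsLinear H)
    (hNoC5 : ¬ HasBergeCycle H 5)
    (v : V) :
    ((N2 H v).card : ℤ) ≥ (∑ x ∈ N1 H v, (hyperDeg H x : ℤ)) - 18 * hyperDeg H v := by
  have := sum_hyperDeg_N1_le (v := v) hUnif hLin hNoC5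
  push_cast [← Nat.cast_sum]
  omega

theorem stmt_1 {V : Type*} [Fintype V] [DecidableEq V]
    (H : Finset (Finset V))
    (hUnif : ∀ e ∈ H, e.card = 3)
    (hLin : IsLinear H)
    (hNoC5 : ¬ HasBergeCycle H 5)
    (v : V) :
    ((N2 H v).card : ℤ) ≥ (∑ x ∈ N1 H v, (hyperDeg H x : ℤ)) - 18 * hyperDeg H v :=
  stmt_1_general H hUnif hLin hNoC5 v
end

section
/- For every n that is 3 times a perfect square, there exists a 3-uniform linear hypergraph on n vertices with exactly (1/(3√3))·n^{3/2} hyperedges that contains no Berge cycle of length 5. -/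
open Finset

/-!
Take the edges to be the words `x ∈ [m]³` and the vertices the words with one letter deleted,
tagged by the position of the deleted letter; an edge contains its three deletions. Two edges
meeting in a vertex of type `k` differ exactly in letter `k`, so a Berge cycle is a closed walk
in `[m]³` changing one letter per step. Around a cycle no letter changes exactly once, so by
parity some position `k` changes at least three times in a `5`-cycle while the other positions
change at most twice in total. Then the word with letter `k` deleted takes at most two values
along the cycle, and two of the steps changing letter `k` pass through the same vertex.
-/

section Transport

variable {V W : Type*} (σ : V ≃ W) {H : Finset (Finset V)}

theorem IsLinear.map_equiv [DecidableEq V] [DecidableEq W] (hH : IsLinear H) :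
    IsLinear (H.map σ.finsetCongr.toEmbedding) := by
  simp only [IsLinear, forall_mem_map, Equiv.finsetCongr_toEmbedding,
    RelEmbedding.coe_toEmbedding, mapEmbedding_apply]
  intro e he f hf hef
  rw [← map_inter, card_map]
  exact hH e he f hf (ne_of_apply_ne _ hef)

theorem HasBergeCycle.of_map_equiv {k : ℕ}
    (hC : HasBergeCycle (H.map σ.finsetCongr.toEmbedding) k) : HasBergeCycle H k := by
  obtain ⟨v, h, hv, hh, hmem⟩ := hC
  refine ⟨σ.symm ∘ v, σ.finsetCongr.symm ∘ h, σ.symm.injective.comp hv,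
    σ.finsetCongr.symm.injective.comp hh, fun i => ?_⟩
  simp only [Function.comp_apply, Equiv.finsetCongr_symm, Equiv.finsetCongr_apply, mem_map_equiv,
    Equiv.symm_symm, Equiv.apply_symm_apply] at hmem ⊢
  exact hmem i

end Transport

theorem ZMod.forall_eq_of_add_one_closed {β : Type*} {n : ℕ} [NeZero n] {y : ZMod n → β}
    {j : ZMod n} (h : ∀ i, y i = y j → y (i + 1) = y j) (i : ZMod n) : y i = y j := by
  have key : ∀ k : ℕ, y (j + k) = y j := by
    intro k
    induction k with
    | zero => simp
    | succ k ih => simpa [add_assoc] using h _ ih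
  simpa using key (i - j).val

theorem ZMod.card_image_le_max_one_card_changes {β : Type*} [DecidableEq β] {n : ℕ} [NeZero n]
    (y : ZMod n → β) : #(univ.image y) ≤ max 1 #{i | y (i + 1) ≠ y i} := by
  set C : Finset (ZMod n) := {i | y (i + 1) ≠ y i}
  rcases C.eq_empty_or_nonempty with hC | hC
  · have hconst : ∀ i, y i = y 0 := ZMod.forall_eq_of_add_one_closed fun i hi => by
      have : i ∉ C := by simp [hC]
      simpa [C, hi] using this
    have : univ.image y = {y 0} := by
      ext b; simp only [mem_image, mem_univ, true_and, mem_singleton]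
      exact ⟨fun ⟨i, hi⟩ => hi ▸ hconst i, fun hb => ⟨0, hb.symm⟩⟩
    simp [this]
  · refine le_max_of_le_right ((card_le_card (t := C.image y) fun b hb => ?_).trans card_image_le)
    obtain ⟨j, -, rfl⟩ := mem_image.mp hb
    by_contra hj
    obtain ⟨i, hi⟩ := hC
    have hconst : ∀ i, y i = y j := ZMod.forall_eq_of_add_one_closed fun i hi => by
      by_contra hne
      exact hj (mem_image.mpr ⟨i, by simp [C, hne, hi], hi⟩)
    simp [C, hconst] at hi

theorem Fin.removeNth_eq_removeNth_iff {α : Type*} {r : ℕ} {k : Fin (r + 1)}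
    {x x' : Fin (r + 1) → α} :
    Fin.removeNth k x = Fin.removeNth k x' ↔ ∀ j ≠ k, x j = x' j := by
  refine ⟨fun h j hj => ?_, fun h => funext fun i => h _ (Fin.succAbove_ne k i)⟩
  obtain ⟨i, rfl⟩ := Fin.exists_succAbove_eq hj
  exact congrFun h i

theorem Fin.eq_of_removeNth_eq_of_ne {α : Type*} {r : ℕ} {k k' : Fin (r + 1)}
    {x x' : Fin (r + 1) → α} (hkk' : k ≠ k') (h : Fin.removeNth k x = Fin.removeNth k x')
    (h' : Fin.removeNth k' x = Fin.removeNth k' x') : x = x' := by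
  rw [Fin.removeNth_eq_removeNth_iff] at h h'
  funext j
  by_cases hj : j = k
  · exact h' j (hj ▸ hkk')
  · exact h j hj

section ProjHypergraph

variable {α : Type*} [DecidableEq α] {r : ℕ}

/-- For `r = 2` and `x = ![i, j, t]` this is the paper's hyperedge `{v_{i,j}, l^t_i, r^t_j}`:
deleting `t`, `j`, `i` from `x` gives `v_{i,j}`, `l^t_i`, `r^t_j`. -/
def projEdge (x : Fin (r + 1) → α) : Finset (Fin (r + 1) × (Fin r → α)) :=
  univ.image fun k => (k, Fin.removeNth k x)

variable (α r) in
def projHypergraph [Fintype α] : Finset (Finset (Fin (r + 1) × (Fin r → α))) :=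
  univ.image projEdge

theorem mem_projEdge {x : Fin (r + 1) → α} {p : Fin (r + 1) × (Fin r → α)} :
    p ∈ projEdge x ↔ p.2 = Fin.removeNth p.1 x := by
  simp only [projEdge, mem_image, mem_univ, true_and]
  exact ⟨fun ⟨k, hk⟩ => hk ▸ rfl, fun hp => ⟨p.1, Prod.ext rfl hp.symm⟩⟩

theorem card_projEdge (x : Fin (r + 1) → α) : #(projEdge x) = r + 1 := by
  rw [projEdge, card_image_of_injective _ fun k k' h => congrArg Prod.fst h, card_univ,
    Fintype.card_fin]

theorem projEdge_injective [NeZero r] :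
    Function.Injective (projEdge : (Fin (r + 1) → α) → _) := by
  intro x x' h
  have hrem : ∀ k, Fin.removeNth k x = Fin.removeNth k x' := fun k => by
    have hk : (k, Fin.removeNth k x) ∈ projEdge x' := h ▸ mem_projEdge.mpr rfl
    exact mem_projEdge.mp hk
  exact Fin.eq_of_removeNth_eq_of_ne (Fin.succAbove_ne 0 0).symm (hrem 0)
    (hrem (Fin.succAbove 0 0))

theorem card_projHypergraph [Fintype α] [NeZero r] :
    #(projHypergraph α r) = Fintype.card α ^ (r + 1) := by
  rw [projHypergraph, card_image_of_injective _ projEdge_injective, card_univ, Fintype.card_fun,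
    Fintype.card_fin]

theorem isLinear_projHypergraph [Fintype α] : IsLinear (projHypergraph α r) := by
  simp only [IsLinear, projHypergraph, mem_image, mem_univ, true_and, forall_exists_index,
    forall_apply_eq_imp_iff]
  intro x x' hxx'
  by_contra! hcard
  obtain ⟨p, hp, p', hp', hpp'⟩ := one_lt_card.mp hcard
  simp only [mem_inter, mem_projEdge] at hp hp'
  -- two common vertices of different types pin down the word
  have hk : p.1 ≠ p'.1 := fun hk => hpp' (Prod.ext hk (by rw [hp.1, hp'.1, hk]))
  exact hxx' (congrArg projEdge
    (Fin.eq_of_removeNth_eq_of_ne hk (hp.1.symm.trans hp.2) (hp'.1.symm.trans hp'.2)))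

end ProjHypergraph

theorem exists_ne_removeNth_eq_of_cycle_five {α : Type*} [DecidableEq α] {r : ℕ}
    (x : ZMod 5 → Fin (r + 1) → α) (d : ZMod 5 → Fin (r + 1))
    (hstep : ∀ i, Fin.removeNth (d i) (x (i + 1)) = Fin.removeNth (d i) (x i))
    (hne : ∀ i, x (i + 1) ≠ x i) :
    ∃ i j, i ≠ j ∧ d i = d j ∧ Fin.removeNth (d i) (x i) = Fin.removeNth (d j) (x j) := by
  have hchange : ∀ i k, x (i + 1) k ≠ x i k ↔ d i = k := by
    intro i k
    have hoff := Fin.removeNth_eq_removeNth_iff.mp (hstep i)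
    refine ⟨fun h => by_contra fun hk => h (hoff k (Ne.symm hk)), ?_⟩
    rintro rfl heq
    exact hne i (funext fun j => if hj : j = d i then hj ▸ heq else hoff j hj)
  -- a coordinate that changes exactly once around a cycle cannot return to its start
  have hcount_ne_one : ∀ k, #{i | d i = k} ≠ 1 := by
    intro k hk
    have himage := ZMod.card_image_le_max_one_card_changes fun i => x i k
    simp only [hchange, hk, max_self] at himage
    obtain ⟨i, hi⟩ := card_eq_one.mp hk
    have hdi : i ∈ ({i | d i = k} : Finset (ZMod 5)) := hi ▸ mem_singleton_self i
    rw [mem_filter_univ] at hdi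
    exact (hchange i k).mpr hdi (card_le_one.mp himage
      _ (mem_image_of_mem _ (mem_univ _)) _ (mem_image_of_mem _ (mem_univ _)))
  have hsum : ∑ k, #{i | d i = k} = 5 := by
    rw [← card_eq_sum_card_fiberwise fun i _ => mem_univ (d i)]
    rfl
  -- counts summing to the odd number 5 cannot all lie in {0, 2}
  obtain ⟨k, hk⟩ : ∃ k, 3 ≤ #{i | d i = k} := by
    by_contra! hsmall
    have heven : Even (∑ k, #{i | d i = k}) := Finset.even_sum _ fun k _ => by
      have := hsmall k
      have := hcount_ne_one k
      rw [Nat.even_iff]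
      omega
    rw [hsum] at heven
    exact absurd heven (by decide)
  have hcompl : #{i | d i = k} + #{i | ¬d i = k} = 5 :=
    card_filter_add_card_filter_not (s := univ) _
  have himage : #(univ.image fun i => Fin.removeNth k (x i)) < #{i | d i = k} :=
    calc #(univ.image fun i => Fin.removeNth k (x i))
      _ ≤ max 1 #{i | Fin.removeNth k (x (i + 1)) ≠ Fin.removeNth k (x i)} :=
          ZMod.card_image_le_max_one_card_changes _
      _ ≤ max 1 #{i | ¬d i = k} :=
          max_le_max le_rfl <| card_le_card <|
            monotone_filter_right _ fun i _ h hdi => h (hdi ▸ hstep i)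
      _ < 3 := by omega
      _ ≤ #{i | d i = k} := hk
  obtain ⟨i, hi, j, hj, hij, heq⟩ :=
    exists_ne_map_eq_of_card_lt_of_maps_to himage fun i _ => mem_image_of_mem _ (mem_univ i)
  rw [mem_filter_univ] at hi hj
  exact ⟨i, j, hij, hi.trans hj.symm, by rw [hi, hj]; exact heq⟩

theorem not_hasBergeCycle_five_projHypergraph {α : Type*} [Fintype α] [DecidableEq α] {r : ℕ} :
    ¬ HasBergeCycle (projHypergraph α r) 5 := by
  rintro ⟨v, h, hv, hh, hmem⟩
  have hedge : ∀ i, ∃ x, projEdge x = h i := fun i => by simpa [projHypergraph] using (hmem i).1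
  choose x hx using hedge
  have hvx : ∀ i, (v (i + 1)).2 = Fin.removeNth (v (i + 1)).1 (x i) := fun i =>
    mem_projEdge.mp ((hx i).symm ▸ (hmem i).2.2)
  have hvx' : ∀ i, (v (i + 1)).2 = Fin.removeNth (v (i + 1)).1 (x (i + 1)) := fun i =>
    mem_projEdge.mp ((hx (i + 1)).symm ▸ (hmem (i + 1)).2.1)
  have hne : ∀ i, x (i + 1) ≠ x i := fun i hxi =>
    (by decide : ∀ i : ZMod 5, i + 1 ≠ i) i (hh (by rw [← hx, ← hx, hxi]))
  obtain ⟨i, j, hij, hd, hrem⟩ :=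
    exists_ne_removeNth_eq_of_cycle_five x (fun i => (v (i + 1)).1)
      (fun i => (hvx' i).symm.trans (hvx i)) hne
  exact hij (add_right_cancel (hv (Prod.ext hd (by rw [hvx i, hvx j]; exact hrem))))

theorem Real.rpow_three_halves_three_mul_sq {m : ℝ} (hm : 0 ≤ m) :
    (3 * m ^ 2) ^ ((3 : ℝ) / 2) = 3 * √3 * m ^ 3 := by
  rw [show (3 : ℝ) / 2 = 1 + 1 / 2 by norm_num, Real.rpow_add' (by positivity) (by norm_num),
    Real.rpow_one, ← Real.sqrt_eq_rpow, Real.sqrt_mul' _ (sq_nonneg m), Real.sqrt_sq hm]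
  ring

theorem stmt_3 (n m : ℕ) (hn : n = 3 * m ^ 2) :
    ∃ H : Finset (Finset (Fin n)),
      (∀ e ∈ H, e.card = 3) ∧ IsLinear H ∧ ¬ HasBergeCycle H 5 ∧
      (H.card : ℝ) = (1 / (3 * Real.sqrt 3)) * (n : ℝ) ^ ((3 : ℝ) / 2) := by
  have hV : Fintype.card (Fin 3 × (Fin 2 → Fin m)) = n := by simp [hn]
  let σ := Fintype.equivFinOfCardEq hV
  refine ⟨(projHypergraph (Fin m) 2).map σ.finsetCongr.toEmbedding, ?_,
    isLinear_projHypergraph.map_equiv σ,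
    fun hC => not_hasBergeCycle_five_projHypergraph (hC.of_map_equiv σ), ?_⟩
  · simp only [forall_mem_map, projHypergraph, forall_mem_image]
    exact fun x _ => card_projEdge x
  · rw [card_map, card_projHypergraph, Fintype.card_fin, hn]
    push_cast
    rw [Real.rpow_three_halves_three_mul_sq (Nat.cast_nonneg m)]
    field_simp
end

section
/- Let H be a 3-uniform linear hypergraph on n vertices with no Berge cycle of length 5, with average degree d = 3|E(H)|/n and maximum degree at most 6d. Then the number of 3-links in H (triples of hyperedges h₁, h₂, h₃ with h₁ ∩ h₂ ≠ ∅, h₂ ∩ h₃ ≠ ∅, h₁ ∩ h₃ = ∅) is at least n·d³ − 144·n·d². -/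
open Finset

open Classical in
/-- The number of 3-links: sets of three hyperedges `{h₁, h₂, h₃}` of `H` with
`h₁ ∩ h₂ ≠ ∅`, `h₂ ∩ h₃ ≠ ∅`, `h₁ ∩ h₃ = ∅`. -/
noncomputable def threeLinkCount {V : Type*} [DecidableEq V] (H : Finset (Finset V)) : ℕ :=
  ((H.powersetCard 3).filter fun s =>
    ∃ h₁ h₂ h₃ : Finset V, s = {h₁, h₂, h₃} ∧
      (h₁ ∩ h₂).Nonempty ∧ (h₂ ∩ h₃).Nonempty ∧ h₁ ∩ h₃ = ∅).card

/-!
Call a *cherry* a tuple `(e, u, w, f, g)` with `u ≠ w` in the edge `e` and edges `f ∋ u`,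
`g ∋ w` other than `e`; there are `∑ (d(u) - 1)(d(w) - 1)` of them, summed over ordered pairs
`u ≠ w` lying in a common edge.  If `f ∩ g = ∅`, then `(f, e, g)` is an ordered 3-link from which
linearity recovers `u` and `w`, and every 3-link has only two orders.  If `f ∩ g ≠ ∅`, linearity
recovers `e` from `u, w`, so there are at most `9 ∑ d(v)² ≤ 54 n d²` such cherries, the maximum
degree bound giving `∑ d(v)² ≤ 6d ∑ d(v)`.  Finally `∑ d(u) d(w) ≥ 2 n d³`: sum the AM-GM
inequality `d(u) d(w) + d³/d(u) + d³/d(w) ≥ 3 d²` over the `2nd` pairs, where each vertex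
contributes at most `2` to `∑ 1/d(u)`.
-/

theorem three_mul_sq_le_mul_add_div_add_div {x y c : ℝ} (hx : 0 < x) (hy : 0 < y) (hc : 0 ≤ c) :
    3 * c ^ 2 ≤ x * y + c ^ 3 / x + c ^ 3 / y := by
  obtain ⟨q, hq0, hq⟩ : ∃ q, 0 ≤ q ∧ q ^ 2 = x * y :=
    ⟨√(x * y), Real.sqrt_nonneg _, Real.sq_sqrt (by positivity)⟩
  have hxy : 2 * q ≤ x + y := by nlinarith [sq_nonneg (x - y), sq_nonneg (x + y - 2 * q)]
  -- with `q = √(xy)` and `x + y ≥ 2q`, the numerator is at least `q (q - c)² (q + 2c)`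
  have key : 0 ≤ (x * y) ^ 2 + c ^ 3 * (x + y) - 3 * c ^ 2 * (x * y) := by
    rw [← hq]
    nlinarith [mul_nonneg (mul_nonneg hq0 (sq_nonneg (q - c))) (by positivity : 0 ≤ q + 2 * c),
      mul_le_mul_of_nonneg_left hxy (pow_nonneg hc 3)]
  have hform : x * y + c ^ 3 / x + c ^ 3 / y - 3 * c ^ 2
      = ((x * y) ^ 2 + c ^ 3 * (x + y) - 3 * c ^ 2 * (x * y)) / (x * y) := by
    field_simp; ring
  have := div_nonneg key (mul_pos hx hy).le
  linarith

theorem Finset.sum_offDiag_fst {α M : Type*} [DecidableEq α] [AddCommMonoid M] (s : Finset α)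
    (f : α → M) : ∑ x ∈ s.offDiag, f x.1 = (#s - 1) • ∑ a ∈ s, f a := by
  rw [sum_finset_product _ s (fun a => s.erase a) (by simp [and_comm, ne_comm]), smul_sum]
  exact sum_congr rfl fun a ha => by simp [card_erase_of_mem ha]

theorem Finset.sum_offDiag_snd {α M : Type*} [DecidableEq α] [AddCommMonoid M] (s : Finset α)
    (f : α → M) : ∑ x ∈ s.offDiag, f x.2 = (#s - 1) • ∑ a ∈ s, f a := by
  rw [sum_finset_product_right _ s (fun a => s.erase a) (by simp; tauto), smul_sum]
  exact sum_congr rfl fun a ha => by simp [card_erase_of_mem ha]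

section Hypergraph

variable {V : Type*}

def flags (H : Finset (Finset V)) : Finset ((_ : Finset V) × V × V) :=
  H.sigma fun e => e.offDiag

theorem mem_flags {H : Finset (Finset V)} {p : (_ : Finset V) × V × V} :
    p ∈ flags H ↔ p.1 ∈ H ∧ p.2.1 ∈ p.1 ∧ p.2.2 ∈ p.1 ∧ p.2.1 ≠ p.2.2 := by
  simp [flags]

variable [DecidableEq V]

def IsThreeLink (a b c : Finset V) : Prop :=
  (a ∩ b).Nonempty ∧ (b ∩ c).Nonempty ∧ a ∩ c = ∅

instance (a b c : Finset V) : Decidable (IsThreeLink a b c) :=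
  inferInstanceAs (Decidable (_ ∧ _ ∧ _))

theorem IsThreeLink.ne {a b c : Finset V} (hl : IsThreeLink a b c) : a ≠ b ∧ a ≠ c ∧ b ≠ c := by
  obtain ⟨hab, hbc, hac⟩ := hl
  refine ⟨?_, ?_, ?_⟩ <;> rintro rfl <;> simp_all [inter_comm]

theorem IsThreeLink.eq_or_eq_of_insert_eq {a b c a' b' c' : Finset V} (hl : IsThreeLink a b c)
    (hl' : IsThreeLink a' b' c') (h : ({a, b, c} : Finset (Finset V)) = {a', b', c'}) :
    (a', b', c') = (a, b, c) ∨ (a', b', c') = (c, b, a) := by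
  have mem : ∀ x ∈ ({a', b', c'} : Finset (Finset V)), x = a ∨ x = b ∨ x = c := by
    intro x hx; simpa [← h] using hx
  obtain ⟨hab, hbc, hac⟩ := hl
  obtain ⟨hab', hbc', hac'⟩ := hl'
  rcases mem a' (by simp) with rfl | rfl | rfl <;> rcases mem b' (by simp) with rfl | rfl | rfl <;>
    rcases mem c' (by simp) with rfl | rfl | rfl <;> simp_all [inter_comm]

def orderedThreeLinks (H : Finset (Finset V)) : Finset (Finset V × Finset V × Finset V) :=
  (H ×ˢ H ×ˢ H).filter fun l => IsThreeLink l.1 l.2.1 l.2.2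

theorem card_orderedThreeLinks_le (H : Finset (Finset V)) :
    #(orderedThreeLinks H) ≤ 2 * threeLinkCount H := by
  classical
  calc #(orderedThreeLinks H)
      ≤ 2 * #((orderedThreeLinks H).image fun l => ({l.1, l.2.1, l.2.2} : Finset (Finset V))) := by
        refine card_le_mul_card_image _ 2 fun s hs => ?_
        obtain ⟨⟨a, b, c⟩, hl, rfl⟩ := mem_image.mp hs
        calc #((orderedThreeLinks H).filter fun l => {l.1, l.2.1, l.2.2} = ({a, b, c} : Finset _))
            ≤ #({(a, b, c), (c, b, a)} : Finset _) := by
              refine card_le_card fun l hl' => ?_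
              obtain ⟨-, hlink⟩ := mem_filter.mp (mem_filter.mp hl').1
              simpa using (mem_filter.mp hl).2.eq_or_eq_of_insert_eq hlink
                (mem_filter.mp hl').2.symm
          _ ≤ 2 := card_le_two
    _ ≤ 2 * threeLinkCount H := by
        unfold threeLinkCount
        gcongr
        intro s hs
        obtain ⟨⟨a, b, c⟩, hl, rfl⟩ := mem_image.mp hs
        have hlink : IsThreeLink a b c := (mem_filter.mp hl).2
        have habc : a ∈ H ∧ b ∈ H ∧ c ∈ H := by simpa using (mem_filter.mp hl).1
        obtain ⟨hab, hac, hbc⟩ := hlink.ne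
        refine mem_filter.mpr ⟨mem_powersetCard.mpr ⟨?_, card_eq_three.mpr
          ⟨a, b, c, hab, hac, hbc, rfl⟩⟩, a, b, c, rfl, hlink⟩
        simpa [insert_subset_iff] using habc

theorem IsLinear.eq_of_mem_inter {H : Finset (Finset V)} (hLin : IsLinear H) {e f : Finset V}
    (he : e ∈ H) (hf : f ∈ H) (hef : e ≠ f) {u w : V} (hu : u ∈ e ∩ f) (hw : w ∈ e ∩ f) :
    u = w :=
  card_le_one.mp (hLin e he f hf hef) u hu w hw

theorem hyperDeg_pos {H : Finset (Finset V)} {e : Finset V} {v : V} (he : e ∈ H) (hv : v ∈ e) :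
    0 < hyperDeg H v :=
  card_pos.mpr ⟨e, mem_filter.mpr ⟨he, hv⟩⟩

def cherries (H : Finset (Finset V)) :
    Finset ((_ : (_ : Finset V) × V × V) × Finset V × Finset V) :=
  (flags H).sigma fun p => (H.filter (p.2.1 ∈ ·)).erase p.1 ×ˢ (H.filter (p.2.2 ∈ ·)).erase p.1

theorem mem_cherries {H : Finset (Finset V)} {e f g : Finset V} {u w : V} :
    ⟨⟨e, u, w⟩, f, g⟩ ∈ cherries H ↔ (e ∈ H ∧ u ∈ e ∧ w ∈ e ∧ u ≠ w) ∧
      (f ≠ e ∧ f ∈ H ∧ u ∈ f) ∧ (g ≠ e ∧ g ∈ H ∧ w ∈ g) := by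
  simp [cherries, mem_flags]

theorem card_cherries (H : Finset (Finset V)) :
    #(cherries H) = ∑ p ∈ flags H, (hyperDeg H p.2.1 - 1) * (hyperDeg H p.2.2 - 1) := by
  rw [cherries, card_sigma]
  refine sum_congr rfl fun p hp => ?_
  obtain ⟨he, hu, hw, -⟩ := mem_flags.mp hp
  rw [card_product, card_erase_of_mem (mem_filter.mpr ⟨he, hu⟩),
    card_erase_of_mem (mem_filter.mpr ⟨he, hw⟩), hyperDeg, hyperDeg]

theorem card_disjoint_cherries_le {H : Finset (Finset V)} (hLin : IsLinear H) :
    #((cherries H).filter fun c => ¬(c.2.1 ∩ c.2.2).Nonempty) ≤ #(orderedThreeLinks H) := by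
  refine card_le_card_of_injOn (fun c => (c.2.1, c.1.1, c.2.2)) ?_ ?_
  · rintro ⟨⟨e, u, w⟩, f, g⟩ hc
    obtain ⟨hc, hfg⟩ := mem_filter.mp hc
    obtain ⟨⟨he, hu, hw, -⟩, ⟨-, hf, huf⟩, ⟨-, hg, hwg⟩⟩ := mem_cherries.mp hc
    exact mem_filter.mpr ⟨by simp [he, hf, hg], ⟨u, by simp [hu, huf]⟩, ⟨w, by simp [hw, hwg]⟩,
      not_nonempty_iff_eq_empty.mp hfg⟩
  · rintro ⟨⟨e, u, w⟩, f, g⟩ hc ⟨⟨e', u', w'⟩, f', g'⟩ hc' h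
    obtain ⟨⟨he, hu, hw, -⟩, ⟨hfe, hf, huf⟩, ⟨hge, hg, hwg⟩⟩ := mem_cherries.mp (mem_filter.mp hc).1
    obtain ⟨⟨-, hu', hw', -⟩, ⟨-, -, huf'⟩, ⟨-, -, hwg'⟩⟩ := mem_cherries.mp (mem_filter.mp hc').1
    obtain ⟨rfl, rfl, rfl⟩ : f = f' ∧ e = e' ∧ g = g' := by simpa using h
    obtain rfl := hLin.eq_of_mem_inter hf he hfe (mem_inter.mpr ⟨huf, hu⟩) (mem_inter.mpr ⟨huf', hu'⟩)
    obtain rfl := hLin.eq_of_mem_inter hg he hge (mem_inter.mpr ⟨hwg, hw⟩) (mem_inter.mpr ⟨hwg', hw'⟩)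
    rfl

theorem card_intersecting_cherries_le {H : Finset (Finset V)} (hUnif : ∀ e ∈ H, #e = 3)
    (hLin : IsLinear H) :
    #((cherries H).filter fun c => (c.2.1 ∩ c.2.2).Nonempty)
      ≤ 9 * #((H ×ˢ H).filter fun q => (q.1 ∩ q.2).Nonempty) := by
  calc #((cherries H).filter fun c => (c.2.1 ∩ c.2.2).Nonempty)
      ≤ #(((H ×ˢ H).filter fun q => (q.1 ∩ q.2).Nonempty).sigma fun q => q.1 ×ˢ q.2) := by
        refine card_le_card_of_injOn (fun c => ⟨(c.2.1, c.2.2), (c.1.2.1, c.1.2.2)⟩) ?_ ?_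
        · rintro ⟨⟨e, u, w⟩, f, g⟩ hc
          obtain ⟨hc, hfg⟩ := mem_filter.mp hc
          obtain ⟨-, ⟨-, hf, huf⟩, ⟨-, hg, hwg⟩⟩ := mem_cherries.mp hc
          simp [hf, hg, hfg, huf, hwg]
        · rintro ⟨⟨e, u, w⟩, f, g⟩ hc ⟨⟨e', u', w'⟩, f', g'⟩ hc' h
          obtain ⟨⟨he, hu, hw, huw⟩, -, -⟩ := mem_cherries.mp (mem_filter.mp hc).1
          obtain ⟨⟨he', hu', hw', -⟩, -, -⟩ := mem_cherries.mp (mem_filter.mp hc').1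
          obtain ⟨⟨rfl, rfl⟩, rfl, rfl⟩ : (f = f' ∧ g = g') ∧ u = u' ∧ w = w' := by simpa using h
          obtain rfl : e = e' := by
            by_contra hee
            exact huw (hLin.eq_of_mem_inter he he' hee (mem_inter.mpr ⟨hu, hu'⟩)
              (mem_inter.mpr ⟨hw, hw'⟩))
          rfl
    _ = 9 * #((H ×ˢ H).filter fun q => (q.1 ∩ q.2).Nonempty) := by
        rw [card_sigma, sum_const_nat fun q hq => ?_, mul_comm]
        obtain ⟨hf, hg⟩ := mem_product.mp (mem_filter.mp hq).1
        rw [card_product, hUnif _ hf, hUnif _ hg]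

variable [Fintype V]

theorem card_intersectingPairs_le (H : Finset (Finset V)) :
    #((H ×ˢ H).filter fun q => (q.1 ∩ q.2).Nonempty) ≤ ∑ v, hyperDeg H v ^ 2 := by
  calc #((H ×ˢ H).filter fun q => (q.1 ∩ q.2).Nonempty)
      ≤ ∑ q ∈ H ×ˢ H, #(q.1 ∩ q.2) := by
        rw [card_eq_sum_ones, sum_filter]
        exact sum_le_sum fun q _ => by split_ifs with h; exacts [card_pos.mpr h, Nat.zero_le _]
    _ = ∑ v, #((H.filter (v ∈ ·)) ×ˢ (H.filter (v ∈ ·))) := by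
        simp only [card_eq_sum_ones (_ ∩ _), card_eq_sum_ones (_ ×ˢ _)]
        exact sum_comm' (by simp; tauto)
    _ = ∑ v, hyperDeg H v ^ 2 := by simp [card_product, hyperDeg, sq]

theorem sum_flags_le_card_orderedThreeLinks_add {H : Finset (Finset V)}
    (hUnif : ∀ e ∈ H, #e = 3) (hLin : IsLinear H) :
    ∑ p ∈ flags H, (hyperDeg H p.2.1 - 1) * (hyperDeg H p.2.2 - 1)
      ≤ #(orderedThreeLinks H) + 9 * ∑ v, hyperDeg H v ^ 2 := by
  rw [← card_cherries, ← card_filter_add_card_filter_not (p := fun c => (c.2.1 ∩ c.2.2).Nonempty),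
    add_comm]
  gcongr
  · exact card_disjoint_cherries_le hLin
  · exact (card_intersecting_cherries_le hUnif hLin).trans
      (Nat.mul_le_mul_left 9 (card_intersectingPairs_le H))

theorem sum_sum_mem_eq_sum_hyperDeg_smul {M : Type*} [AddCommMonoid M] (H : Finset (Finset V))
    (f : V → M) : ∑ e ∈ H, ∑ v ∈ e, f v = ∑ v, hyperDeg H v • f v := by
  rw [sum_comm' (t' := univ) (s' := fun v => H.filter (v ∈ ·)) (by simp [and_comm])]
  simp only [sum_const, hyperDeg]

theorem sum_hyperDeg {H : Finset (Finset V)} (hUnif : ∀ e ∈ H, #e = 3) :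
    ∑ v, hyperDeg H v = 3 * #H := by
  have h := sum_sum_mem_eq_sum_hyperDeg_smul H fun _ => (1 : ℕ)
  simp only [sum_const, smul_eq_mul, mul_one] at h
  rw [← h, sum_congr rfl hUnif, sum_const, smul_eq_mul, mul_comm]

theorem sum_flags_fst {M : Type*} [AddCommMonoid M] {H : Finset (Finset V)}
    (hUnif : ∀ e ∈ H, #e = 3) (f : V → M) :
    ∑ p ∈ flags H, f p.2.1 = 2 • ∑ v, hyperDeg H v • f v := by
  rw [flags, sum_sigma, ← sum_sum_mem_eq_sum_hyperDeg_smul, smul_sum]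
  exact sum_congr rfl fun e he => by rw [sum_offDiag_fst, hUnif e he]

theorem sum_flags_snd {M : Type*} [AddCommMonoid M] {H : Finset (Finset V)}
    (hUnif : ∀ e ∈ H, #e = 3) (f : V → M) :
    ∑ p ∈ flags H, f p.2.2 = 2 • ∑ v, hyperDeg H v • f v := by
  rw [flags, sum_sigma, ← sum_sum_mem_eq_sum_hyperDeg_smul, smul_sum]
  exact sum_congr rfl fun e he => by rw [sum_offDiag_snd, hUnif e he]

theorem two_mul_card_mul_pow_three_le_sum_flags {H : Finset (Finset V)}
    (hUnif : ∀ e ∈ H, #e = 3) {d : ℝ} (hd0 : 0 ≤ d)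
    (hd : ∑ v, (hyperDeg H v : ℝ) = Fintype.card V * d) :
    2 * Fintype.card V * d ^ 3 ≤ ∑ p ∈ flags H, (hyperDeg H p.2.1 : ℝ) * hyperDeg H p.2.2 := by
  set a : V → ℝ := fun v => hyperDeg H v
  have hpoint : ∀ p ∈ flags H,
      3 * d ^ 2 - d ^ 3 / a p.2.1 - d ^ 3 / a p.2.2 ≤ a p.2.1 * a p.2.2 := by
    intro p hp
    obtain ⟨he, hu, hw, -⟩ := mem_flags.mp hp
    have := three_mul_sq_le_mul_add_div_add_div (Nat.cast_pos.mpr (hyperDeg_pos he hu))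
      (Nat.cast_pos.mpr (hyperDeg_pos he hw)) hd0
    linarith
  have hcard : (#(flags H) : ℝ) = 2 * (Fintype.card V * d) := by
    simpa [← hd] using sum_flags_fst hUnif fun _ => (1 : ℝ)
  have hinv : ∑ v, hyperDeg H v • (d ^ 3 / a v) ≤ Fintype.card V * d ^ 3 := by
    calc ∑ v, hyperDeg H v • (d ^ 3 / a v) ≤ ∑ _v : V, d ^ 3 := sum_le_sum fun v _ => by
          rw [nsmul_eq_mul]
          rcases eq_or_ne (a v) 0 with h | h
          · rw [h, div_zero, mul_zero]; positivity
          · exact (mul_div_cancel₀ _ h).le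
      _ = Fintype.card V * d ^ 3 := by simp
  have hfst := sum_flags_fst hUnif fun v => d ^ 3 / a v
  have hsnd := sum_flags_snd hUnif fun v => d ^ 3 / a v
  calc 2 * Fintype.card V * d ^ 3
      ≤ 3 * d ^ 2 * #(flags H) - ∑ p ∈ flags H, d ^ 3 / a p.2.1
          - ∑ p ∈ flags H, d ^ 3 / a p.2.2 := by
        rw [hcard, hfst, hsnd, two_nsmul]; nlinarith
    _ = ∑ p ∈ flags H, (3 * d ^ 2 - d ^ 3 / a p.2.1 - d ^ 3 / a p.2.2) := by
        rw [sum_sub_distrib, sum_sub_distrib, sum_const, nsmul_eq_mul, mul_comm]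
    _ ≤ ∑ p ∈ flags H, a p.2.1 * a p.2.2 := sum_le_sum hpoint

theorem sum_flags_mul_sub_le {H : Finset (Finset V)} (hUnif : ∀ e ∈ H, #e = 3) :
    ∑ p ∈ flags H, (hyperDeg H p.2.1 : ℝ) * hyperDeg H p.2.2 - 4 * ∑ v, (hyperDeg H v : ℝ) ^ 2
      ≤ ((∑ p ∈ flags H, (hyperDeg H p.2.1 - 1) * (hyperDeg H p.2.2 - 1) : ℕ) : ℝ) := by
  have hsq : ∑ v, hyperDeg H v • (hyperDeg H v : ℝ) = ∑ v, (hyperDeg H v : ℝ) ^ 2 := by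
    simp [sq]
  have hfst := sum_flags_fst hUnif fun v => (hyperDeg H v : ℝ)
  have hsnd := sum_flags_snd hUnif fun v => (hyperDeg H v : ℝ)
  rw [hsq] at hfst hsnd
  calc _ = ∑ p ∈ flags H, ((hyperDeg H p.2.1 : ℝ) * hyperDeg H p.2.2
          - hyperDeg H p.2.1 - hyperDeg H p.2.2) := by
        rw [sum_sub_distrib, sum_sub_distrib, hfst, hsnd]; ring
    _ ≤ _ := by
        rw [Nat.cast_sum]
        refine sum_le_sum fun p hp => ?_
        obtain ⟨he, hu, hw, -⟩ := mem_flags.mp hp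
        rw [Nat.cast_mul, Nat.cast_sub (hyperDeg_pos he hu), Nat.cast_sub (hyperDeg_pos he hw)]
        push_cast
        linarith

end Hypergraph

theorem stmt_9_general {V : Type*} [Fintype V] [DecidableEq V]
    (H : Finset (Finset V))
    (hUnif : ∀ e ∈ H, e.card = 3)
    (hLin : IsLinear H)
    (n : ℕ) (hn : n = Fintype.card V)
    (d : ℝ) (hd : d = 3 * H.card / n)
    (hmax : ∀ v : V, (hyperDeg H v : ℝ) ≤ 6 * d) :
    (threeLinkCount H : ℝ) ≥ n * d ^ 3 - 144 * n * d ^ 2 := by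
  subst hn
  have hd0 : 0 ≤ d := by rw [hd]; positivity
  have hsum : ∑ v, (hyperDeg H v : ℝ) = Fintype.card V * d := by
    rcases (Fintype.card V).eq_zero_or_pos with h | h
    · simp [univ_eq_empty_iff.mpr (Fintype.card_eq_zero_iff.mp h), h]
    · rw [hd, mul_div_cancel₀ _ (by positivity)]
      exact_mod_cast sum_hyperDeg hUnif
  have hsq : ∑ v, (hyperDeg H v : ℝ) ^ 2 ≤ 6 * Fintype.card V * d ^ 2 := by
    calc ∑ v, (hyperDeg H v : ℝ) ^ 2 ≤ ∑ v, 6 * d * hyperDeg H v := sum_le_sum fun v _ => by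
          rw [sq]; exact mul_le_mul_of_nonneg_right (hmax v) (by positivity)
      _ = 6 * Fintype.card V * d ^ 2 := by rw [← mul_sum, hsum]; ring
  have hcount : ((∑ p ∈ flags H, (hyperDeg H p.2.1 - 1) * (hyperDeg H p.2.2 - 1) : ℕ) : ℝ)
      ≤ #(orderedThreeLinks H) + 9 * ∑ v, (hyperDeg H v : ℝ) ^ 2 := by
    exact_mod_cast sum_flags_le_card_orderedThreeLinks_add hUnif hLin
  have hlinks : (#(orderedThreeLinks H) : ℝ) ≤ 2 * threeLinkCount H := by
    exact_mod_cast card_orderedThreeLinks_le H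
  have hpaths := two_mul_card_mul_pow_three_le_sum_flags hUnif hd0 hsum
  have hflags := sum_flags_mul_sub_le (H := H) hUnif
  have : 0 ≤ (Fintype.card V : ℝ) * d ^ 2 := by positivity
  linarith

theorem stmt_9 {V : Type*} [Fintype V] [DecidableEq V]
    (H : Finset (Finset V))
    (hUnif : ∀ e ∈ H, e.card = 3)
    (hLin : IsLinear H)
    (hNoC5 : ¬ HasBergeCycle H 5)
    (n : ℕ) (hn : n = Fintype.card V)
    (d : ℝ) (hd : d = 3 * H.card / n)
    (hmax : ∀ v : V, (hyperDeg H v : ℝ) ≤ 6 * d) :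
    (threeLinkCount H : ℝ) ≥ n * d ^ 3 - 144 * n * d ^ 2 :=
  stmt_9_general H hUnif hLin n hn d hd hmax
end

section
/- Let G be a bipartite graph on z vertices with girth at least 2k (for k ≥ 2), with parts L = {l_1,...,l_{z₁}} and R = {r_1,...,r_{z₂}}. For an integer q ≥ 1, construct the 3-uniform hypergraph H with vertex set the disjoint union of copies L_t = {l^t_1,...,l^t_{z₁}}, R_t = {r^t_1,...,r^t_{z₂}} for 1 ≤ t ≤ q together with B = {v_{i,j} : l_i r_j ∈ E(G)}, and hyperedges {v_{i,j}, l^t_i, r^t_j} for all l_i r_j ∈ E(G) and 1 ≤ t ≤ q. Then H is linear and contains no linear cycle of odd length 2k'+1 for any 1 ≤ k' ≤ k. -/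
open Finset

/-- A linear cycle of length `m`: distinct vertices `v i` and distinct hyperedges `h i`
with `h i ∩ h (i+1) = {v (i+1)}` cyclically and non-consecutive hyperedges disjoint. -/
def HasLinearCycle {V : Type*} [DecidableEq V] (H : Finset (Finset V)) (m : ℕ) : Prop :=
  ∃ (v : ZMod m → V) (h : ZMod m → Finset V),
    Function.Injective v ∧ Function.Injective h ∧
    (∀ i, h i ∈ H) ∧
    (∀ i, h i ∩ h (i + 1) = {v (i + 1)}) ∧
    (∀ i j, j ≠ i → j ≠ i + 1 → i ≠ j + 1 → h i ∩ h j = ∅)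

/-!
Send every vertex of `H` to its shadow in `G` (`l^t_i ↦ l_i`, `r^t_j ↦ r_j`, `v_{i,j} ↦ l_i`), so
that each hyperedge lands on the edge `l_i r_j` it comes from. Let `C` be a linear cycle of odd
length `m`. If no vertex of `C` lies in `B`, the vertices of `C` alternate between the copies of
`L` and of `R`, which is impossible for odd `m`. Two consecutive hyperedges of `C` lie in the same
layer `t` unless they meet in `B`, and then they are two layers over the same edge; so `C` cannot
meet `B` exactly once. If `C` meets `B` twice, then, as vertices of `B` are never consecutive and
`m` is odd, some hyperedge `h` of `C` has both its cycle vertices outside `B`, and no other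
hyperedge of `C` lies over the edge of `h`. The shadow of `C - h` is a walk in `G` joining the
ends of that edge and avoiding it, in which each vertex of `B` costs no step: a cycle of `G` of
length at most `m - 2 < 2k`.
-/

namespace ZMod

variable {m : ℕ}

theorem add_one_add_natCast_ne_self (i : ZMod m) {n : ℕ} (hn : n + 1 < m) :
    i + 1 + n ≠ i := by
  intro h
  have h0 : ((n + 1 : ℕ) : ZMod m) = 0 := by push_cast; linear_combination h
  have := Nat.le_of_dvd n.succ_pos ((natCast_eq_zero_iff _ _).mp h0)
  omega

theorem add_one_add_natCast_pred [NeZero m] (i : ZMod m) : i + 1 + ((m - 1 : ℕ) : ZMod m) = i := by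
  rw [Nat.cast_sub NeZero.one_le, natCast_self]
  ring

theorem not_forall_succ_eq_not (hm : Odd m) (f : ZMod m → Bool) : ¬ ∀ i, f (i + 1) = !f i := by
  intro hf
  obtain ⟨r, rfl⟩ := hm
  have hev : ∀ n : ℕ, f ((2 * n : ℕ) : ZMod (2 * r + 1)) = f 0 := by
    intro n
    induction n with
    | zero => simp
    | succ n ih =>
      rw [show ((2 * (n + 1) : ℕ) : ZMod (2 * r + 1)) = (2 * n : ℕ) + 1 + 1 by push_cast; ring,
        hf, hf, Bool.not_not, ih]
  have h1 := hev (r + 1)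
  rw [show ((2 * (r + 1) : ℕ) : ZMod (2 * r + 1)) = 0 + 1 by
    rw [show 2 * (r + 1) = 2 * r + 1 + 1 by ring, Nat.cast_succ, natCast_self], hf] at h1
  exact Bool.not_ne_self _ h1

theorem exists_eq_false_and_succ_eq_false (hm : Odd m) (f : ZMod m → Bool)
    (hf : ∀ i, ¬ (f i ∧ f (i + 1))) : ∃ i, f i = false ∧ f (i + 1) = false := by
  by_contra! h
  refine not_forall_succ_eq_not hm f fun i => ?_
  cases hi : f i
  · simpa using h i hi
  · simpa [hi] using hf i

theorem succ_eq_of_forall_ne [NeZero m] {X : Type*} (f : ZMod m → X) (b : ZMod m)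
    (hf : ∀ i ≠ b, f (i + 1) = f i) : f (b + 1) = f b := by
  have key : ∀ n ≤ m - 1, f (b + 1 + n) = f (b + 1) := by
    intro n hn
    induction n with
    | zero => simp
    | succ n ih =>
      rw [Nat.cast_succ, ← add_assoc, hf _ (add_one_add_natCast_ne_self b (by omega)),
        ih (by omega)]
  simpa [add_one_add_natCast_pred] using (key (m - 1) le_rfl).symm

end ZMod

namespace SimpleGraph

variable {V : Type*} [DecidableEq V] {G : SimpleGraph V}

theorem exists_walk_of_eq_or_adj (u : ℕ → V) (e : Sym2 V) (N : ℕ)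
    (hu : ∀ n < N, u n ≠ u (n + 1) → G.Adj (u n) (u (n + 1)) ∧ s(u n, u (n + 1)) ≠ e) :
    ∃ w : G.Walk (u 0) (u N), e ∉ w.edges ∧ w.length ≤ #{n ∈ range N | u n ≠ u (n + 1)} := by
  induction N with
  | zero => exact ⟨.nil, by simp, by simp⟩
  | succ N ih =>
    obtain ⟨w, hwe, hwl⟩ := ih fun n hn => hu n (by omega)
    rw [range_add_one, filter_insert]
    by_cases hN : u N = u (N + 1)
    · exact ⟨w.copy rfl hN, by simpa using hwe, by simpa [hN] using hwl⟩
    · obtain ⟨hadj, hne⟩ := hu N (by omega) hN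
      refine ⟨w.concat hadj, by simp [Walk.edges_concat, hwe, hne.symm], ?_⟩
      rw [if_pos hN, card_insert_of_notMem (by simp), Walk.length_concat]
      omega

theorem egirth_le_length_add_one {x y : V} (hadj : G.Adj x y) (w : G.Walk y x)
    (hw : s(x, y) ∉ w.edges) : G.egirth ≤ w.length + 1 := by
  have hc := Path.cons_isCycle w.toPath hadj fun h => hw (w.edges_toPath_subset_edges h)
  calc G.egirth ≤ _ := egirth_le_length hc
    _ ≤ w.length + 1 := by
      simp only [Walk.length_cons]
      exact_mod_cast Nat.succ_le_succ w.length_bypass_le_length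

theorem egirth_le_card_of_closed_lazy_walk {m : ℕ} [NeZero m] (g : ZMod m → V)
    (ε : ZMod m → Sym2 V) (hε : ∀ i, ε i ∈ G.edgeSet) (hg : ∀ i, g i ∈ ε i ∧ g (i + 1) ∈ ε i)
    {i₀ : ZMod m} (hi₀ : g i₀ ≠ g (i₀ + 1)) (hε₀ : ∀ j ≠ i₀, ε j ≠ ε i₀) :
    G.egirth ≤ #{i | g i ≠ g (i + 1)} := by
  have hstep : ∀ i, g i ≠ g (i + 1) → G.Adj (g i) (g (i + 1)) ∧ s(g i, g (i + 1)) = ε i := by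
    intro i hi
    have hεi := ((Sym2.mem_and_mem_iff hi).mp (hg i)).symm
    exact ⟨by rw [← mem_edgeSet, hεi]; exact hε i, hεi⟩
  set φ : ℕ → ZMod m := fun n => i₀ + 1 + n
  have hφ : ∀ n, φ (n + 1) = φ n + 1 := fun n => by simp [φ, add_assoc]
  have hφ₀ : ∀ n < m - 1, φ n ≠ i₀ := fun n hn => ZMod.add_one_add_natCast_ne_self i₀ (by omega)
  obtain ⟨w, hwe, hwl⟩ := exists_walk_of_eq_or_adj (G := G) (g ∘ φ) (ε i₀) (m - 1)
    fun n hn hne => by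
      simp only [Function.comp_apply, hφ] at hne ⊢
      obtain ⟨hadj, hs⟩ := hstep _ hne
      exact ⟨hadj, hs ▸ hε₀ _ (hφ₀ n hn)⟩
  have hcount : #{n ∈ range (m - 1) | (g ∘ φ) n ≠ (g ∘ φ) (n + 1)} ≤
      #(({i | g i ≠ g (i + 1)} : Finset (ZMod m)).erase i₀) := by
    refine card_le_card_of_injOn φ (fun n hn => ?_) (fun n hn n' hn' h => ?_)
    · simp only [coe_filter, mem_range, Function.comp_apply, hφ, Set.mem_ofPred_eq] at hn
      simp [hφ₀ n hn.1, hn.2]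
    · simp only [coe_filter, mem_range, Set.mem_ofPred_eq] at hn hn'
      have := (ZMod.natCast_eq_natCast_iff' n n' m).mp (add_left_cancel h)
      rwa [Nat.mod_eq_of_lt (by omega), Nat.mod_eq_of_lt (by omega)] at this
  obtain ⟨hadj, hs⟩ := hstep i₀ hi₀
  have hw := egirth_le_length_add_one hadj
    (w.copy (by simp [φ]) (by simp [φ, ZMod.add_one_add_natCast_pred])) (by simpa [hs] using hwe)
  have hi₀mem : i₀ ∈ ({i | g i ≠ g (i + 1)} : Finset (ZMod m)) := mem_filter.mpr ⟨mem_univ i₀, hi₀⟩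
  calc G.egirth ≤ _ := hw
    _ ≤ _ := by
      rw [Walk.length_copy, ← card_erase_add_one hi₀mem]
      exact_mod_cast Nat.add_le_add_right (hwl.trans hcount) 1

end SimpleGraph

namespace Blowup

variable {ι α β : Type*} {G : SimpleGraph (α ⊕ β)}

abbrev CrossEdge (G : SimpleGraph (α ⊕ β)) := {p : α × β // G.Adj (Sum.inl p.1) (Sum.inr p.2)}

/-- `Sum.inl (t, i)` is `l^t_i`, `Sum.inr (Sum.inl (t, j))` is `r^t_j`, and `Sum.inr (Sum.inr e)`
is the vertex `v_{i,j}` of `B` for the edge `e = l_i r_j`; `isEdge` tests membership in `B`. -/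
abbrev Vertex (ι : Type*) (G : SimpleGraph (α ⊕ β)) := (ι × α) ⊕ ((ι × β) ⊕ CrossEdge G)

def CrossEdge.toSym2 (e : CrossEdge G) : Sym2 (α ⊕ β) := s(Sum.inl e.1.1, Sum.inr e.1.2)

theorem CrossEdge.toSym2_mem_edgeSet (e : CrossEdge G) : e.toSym2 ∈ G.edgeSet := e.2

theorem CrossEdge.toSym2_injective : Function.Injective (CrossEdge.toSym2 (G := G)) := by
  rintro ⟨⟨a, b⟩, _⟩ ⟨⟨a', b'⟩, _⟩ h
  simp_all [CrossEdge.toSym2]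

def isEdge : Vertex ι G → Bool
  | Sum.inr (Sum.inr _) => true
  | _ => false

def shadow : Vertex ι G → α ⊕ β
  | Sum.inl x => Sum.inl x.2
  | Sum.inr (Sum.inl y) => Sum.inr y.2
  | Sum.inr (Sum.inr e) => Sum.inl e.1.1

variable [DecidableEq ι] [DecidableEq α] [DecidableEq β]

def hyperedge (x : ι × CrossEdge G) : Finset (Vertex ι G) :=
  {Sum.inr (Sum.inr x.2), Sum.inl (x.1, x.2.1.1), Sum.inr (Sum.inl (x.1, x.2.1.2))}

variable {x x' : ι × CrossEdge G} {y z : Vertex ι G}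

theorem mem_hyperedge : y ∈ hyperedge x ↔ y = Sum.inr (Sum.inr x.2) ∨
    y = Sum.inl (x.1, x.2.1.1) ∨ y = Sum.inr (Sum.inl (x.1, x.2.1.2)) := by
  simp [hyperedge]

theorem card_hyperedge : #(hyperedge x) = 3 := by
  simp [hyperedge]

theorem edgeVertex_mem_hyperedge : Sum.inr (Sum.inr x.2) ∈ hyperedge x := by
  simp [hyperedge]

theorem eq_of_isEdge (hy : y ∈ hyperedge x) (h : isEdge y) : y = Sum.inr (Sum.inr x.2) := by
  rcases mem_hyperedge.mp hy with rfl | rfl | rfl <;> simp_all [isEdge]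

theorem fst_eq_of_mem_of_mem (hy : y ∈ hyperedge x) (hy' : y ∈ hyperedge x')
    (h : isEdge y = false) : x.1 = x'.1 := by
  rcases mem_hyperedge.mp hy with rfl | rfl | rfl <;>
    rcases mem_hyperedge.mp hy' with h' | h' | h' <;> simp_all [isEdge]

theorem isLeft_eq_not_isLeft (hy : y ∈ hyperedge x) (hz : z ∈ hyperedge x) (hyz : y ≠ z)
    (hy' : isEdge y = false) (hz' : isEdge z = false) : y.isLeft = !z.isLeft := by
  rcases mem_hyperedge.mp hy with rfl | rfl | rfl <;>
    rcases mem_hyperedge.mp hz with rfl | rfl | rfl <;> simp_all [isEdge]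

theorem shadow_mem (hy : y ∈ hyperedge x) : shadow y ∈ x.2.toSym2 := by
  rcases mem_hyperedge.mp hy with rfl | rfl | rfl <;> simp [shadow, CrossEdge.toSym2]

theorem shadow_ne (hy : y ∈ hyperedge x) (hz : z ∈ hyperedge x) (hyz : y ≠ z)
    (hy' : isEdge y = false) (hz' : isEdge z = false) : shadow y ≠ shadow z := by
  rcases mem_hyperedge.mp hy with rfl | rfl | rfl <;>
    rcases mem_hyperedge.mp hz with rfl | rfl | rfl <;> simp_all [isEdge, shadow]

theorem eq_of_mem_inter (hy : y ∈ hyperedge x ∩ hyperedge x') (hz : z ∈ hyperedge x ∩ hyperedge x')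
    (hyz : y ≠ z) : x = x' := by
  obtain ⟨t, ⟨⟨a, b⟩, _⟩⟩ := x
  obtain ⟨t', ⟨⟨a', b'⟩, _⟩⟩ := x'
  simp only [mem_inter, mem_hyperedge] at hy hz
  rcases hy with ⟨rfl | rfl | rfl, h | h | h⟩ <;> rcases hz with ⟨rfl | rfl | rfl, h' | h' | h'⟩ <;>
    simp_all

theorem card_inter_hyperedge_le_one (h : x ≠ x') : #(hyperedge x ∩ hyperedge x') ≤ 1 :=
  card_le_one.mpr fun _ hy _ hz => by_contra fun hyz => h (eq_of_mem_inter hy hz hyz)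

theorem isLinear_image_hyperedge [Fintype ι] [Fintype α] [Fintype β] [DecidableRel G.Adj] :
    IsLinear ((univ : Finset (ι × CrossEdge G)).image hyperedge) := by
  simp only [IsLinear, mem_image, mem_univ, true_and]
  rintro _ ⟨x, rfl⟩ _ ⟨x', rfl⟩ hne
  exact card_inter_hyperedge_le_one fun h => hne (h ▸ rfl)

structure IsLinearCycle {m : ℕ} (v : ZMod m → Vertex ι G) (c : ZMod m → ι × CrossEdge G) :
    Prop where
  injective : Function.Injective v
  inter_succ : ∀ i, hyperedge (c i) ∩ hyperedge (c (i + 1)) = {v (i + 1)}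
  inter_eq_empty : ∀ i j, j ≠ i → j ≠ i + 1 → i ≠ j + 1 → hyperedge (c i) ∩ hyperedge (c j) = ∅

theorem exists_isLinearCycle [Fintype ι] [Fintype α] [Fintype β] [DecidableRel G.Adj] {m : ℕ}
    (h : HasLinearCycle ((univ : Finset (ι × CrossEdge G)).image hyperedge) m) :
    ∃ (v : ZMod m → Vertex ι G) (c : ZMod m → ι × CrossEdge G), IsLinearCycle v c := by
  obtain ⟨v, h, hv, -, hmem, hsucc, hdisj⟩ := h
  choose c hc using fun i => (mem_image.mp (hmem i)).imp fun _ => And.right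
  refine ⟨v, c, hv, fun i => ?_, fun i j => ?_⟩ <;> simp only [hc]
  exacts [hsucc i, hdisj i j]

/-- A vertex of `B` on the cycle gets the shadow of its successor, so that the step leaving it
does not move. -/
def cycleShadow {m : ℕ} (v : ZMod m → Vertex ι G) (i : ZMod m) : α ⊕ β :=
  if isEdge (v i) then shadow (v (i + 1)) else shadow (v i)

namespace IsLinearCycle

variable {m : ℕ} {v : ZMod m → Vertex ι G} {c : ZMod m → ι × CrossEdge G}

theorem mem_succ_left (hC : IsLinearCycle v c) (i : ZMod m) : v (i + 1) ∈ hyperedge (c i) :=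
  (mem_inter.mp (hC.inter_succ i ▸ mem_singleton_self _)).1

theorem mem_succ_right (hC : IsLinearCycle v c) (i : ZMod m) : v (i + 1) ∈ hyperedge (c (i + 1)) :=
  (mem_inter.mp (hC.inter_succ i ▸ mem_singleton_self _)).2

theorem mem_self (hC : IsLinearCycle v c) (i : ZMod m) : v i ∈ hyperedge (c i) := by
  simpa using hC.mem_succ_right (i - 1)

theorem succ_ne (hC : IsLinearCycle v c) (i : ZMod m) : c (i + 1) ≠ c i := by
  intro h
  have := congrArg card (hC.inter_succ i)
  rw [h, inter_self, card_hyperedge, card_singleton] at this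
  omega

theorem vertex_succ_ne (hC : IsLinearCycle v c) (i : ZMod m) : v (i + 1) ≠ v i := fun h =>
  hC.succ_ne i (by rw [hC.injective h])

theorem not_isEdge_and_isEdge_succ (hC : IsLinearCycle v c) (i : ZMod m) :
    ¬ (isEdge (v i) ∧ isEdge (v (i + 1))) := fun ⟨h, h'⟩ =>
  hC.vertex_succ_ne i
    ((eq_of_isEdge (hC.mem_succ_left i) h').trans (eq_of_isEdge (hC.mem_self i) h).symm)

theorem snd_eq_of_isEdge (hC : IsLinearCycle v c) {i : ZMod m} (h : isEdge (v (i + 1))) :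
    (c i).2 = (c (i + 1)).2 := by
  simpa using (eq_of_isEdge (hC.mem_succ_left i) h).symm.trans
    (eq_of_isEdge (hC.mem_succ_right i) h)

theorem fst_ne_of_isEdge (hC : IsLinearCycle v c) {i : ZMod m} (h : isEdge (v (i + 1))) :
    (c i).1 ≠ (c (i + 1)).1 := fun h1 =>
  hC.succ_ne i (Prod.ext h1 (hC.snd_eq_of_isEdge h)).symm

theorem fst_eq_of_not_isEdge (hC : IsLinearCycle v c) {i : ZMod m}
    (h : isEdge (v (i + 1)) = false) : (c i).1 = (c (i + 1)).1 :=
  fst_eq_of_mem_of_mem (hC.mem_succ_left i) (hC.mem_succ_right i) h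

theorem snd_ne_of_not_isEdge (hC : IsLinearCycle v c) {i j : ZMod m}
    (hi : isEdge (v i) = false) (hi' : isEdge (v (i + 1)) = false) (hj : j ≠ i) :
    (c j).2 ≠ (c i).2 := by
  intro h
  have hmem : Sum.inr (Sum.inr (c i).2) ∈ hyperedge (c j) ∩ hyperedge (c i) :=
    mem_inter.mpr ⟨h ▸ edgeVertex_mem_hyperedge, edgeVertex_mem_hyperedge⟩
  by_cases hj₁ : j = i + 1
  · rw [hj₁, inter_comm, hC.inter_succ, mem_singleton] at hmem
    simp [← hmem, isEdge] at hi'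
  by_cases hj₂ : i = j + 1
  · rw [hj₂, hC.inter_succ, mem_singleton, ← hj₂] at hmem
    simp [← hmem, isEdge] at hi
  rw [hC.inter_eq_empty j i (Ne.symm hj) hj₂ hj₁] at hmem
  simp at hmem

theorem exists_isEdge (hC : IsLinearCycle v c) (hm : Odd m) : ∃ i, isEdge (v i) := by
  by_contra! h
  simp only [Bool.not_eq_true] at h
  exact ZMod.not_forall_succ_eq_not hm (fun i => (v i).isLeft) fun i =>
    isLeft_eq_not_isLeft (hC.mem_succ_left i) (hC.mem_self i) (hC.vertex_succ_ne i) (h _) (h _)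

theorem exists_isEdge_ne [NeZero m] (hC : IsLinearCycle v c) {b : ZMod m} (hb : isEdge (v b)) :
    ∃ b' ≠ b, isEdge (v b') := by
  by_contra! h
  simp only [Bool.not_eq_true] at h
  refine hC.fst_ne_of_isEdge (i := b - 1) (by simpa using hb) ?_
  have := ZMod.succ_eq_of_forall_ne (fun i => (c i).1) (b - 1) fun i hi =>
    (hC.fst_eq_of_not_isEdge (h _ fun h' => hi (by rw [← h', add_sub_cancel_right]))).symm
  simpa using this.symm

theorem cycleShadow_mem (hC : IsLinearCycle v c) (i : ZMod m) :
    cycleShadow v i ∈ (c i).2.toSym2 ∧ cycleShadow v (i + 1) ∈ (c i).2.toSym2 := by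
  constructor
  · unfold cycleShadow
    split_ifs
    exacts [shadow_mem (hC.mem_succ_left i), shadow_mem (hC.mem_self i)]
  · unfold cycleShadow
    split_ifs with h
    · rw [hC.snd_eq_of_isEdge h]
      exact shadow_mem (hC.mem_succ_left (i + 1))
    · exact shadow_mem (hC.mem_succ_left i)

theorem cycleShadow_succ_eq (hC : IsLinearCycle v c) {i : ZMod m} (h : isEdge (v i)) :
    cycleShadow v (i + 1) = cycleShadow v i := by
  have h' : isEdge (v (i + 1)) = false := by simpa [h] using hC.not_isEdge_and_isEdge_succ i
  simp [cycleShadow, h, h']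

theorem egirth_le_of_isEdge_of_isEdge [NeZero m] (hC : IsLinearCycle v c) (hm : Odd m)
    {b₁ b₂ : ZMod m} (hb₁ : isEdge (v b₁)) (hb₂ : isEdge (v b₂)) (hne : b₁ ≠ b₂) :
    G.egirth ≤ (m - 2 : ℕ) := by
  obtain ⟨i₀, h₀, h₀'⟩ := ZMod.exists_eq_false_and_succ_eq_false hm (fun i => isEdge (v i))
    hC.not_isEdge_and_isEdge_succ
  have hshadow : cycleShadow v i₀ ≠ cycleShadow v (i₀ + 1) := by
    simpa [cycleShadow, h₀, h₀'] using shadow_ne (hC.mem_self i₀) (hC.mem_succ_left i₀)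
      (hC.vertex_succ_ne i₀).symm h₀ h₀'
  have hsub : ({i | cycleShadow v i ≠ cycleShadow v (i + 1)} : Finset (ZMod m)) ⊆
      univ \ {b₁, b₂} := by
    intro i hi
    simp only [mem_filter, mem_univ, true_and] at hi
    simp only [mem_sdiff, mem_univ, true_and, mem_insert, mem_singleton]
    rintro (rfl | rfl)
    exacts [hi (hC.cycleShadow_succ_eq hb₁).symm, hi (hC.cycleShadow_succ_eq hb₂).symm]
  calc G.egirth ≤ #{i | cycleShadow v i ≠ cycleShadow v (i + 1)} :=
        SimpleGraph.egirth_le_card_of_closed_lazy_walk _ (fun i => (c i).2.toSym2)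
          (fun i => (c i).2.toSym2_mem_edgeSet) hC.cycleShadow_mem hshadow
          fun _ hj => hC.snd_ne_of_not_isEdge h₀ h₀' hj ∘ (CrossEdge.toSym2_injective ·)
    _ ≤ (m - 2 : ℕ) := by
      have := card_le_card hsub
      rw [card_sdiff, card_univ, ZMod.card, inter_univ, card_pair hne] at this
      exact_mod_cast this

theorem egirth_le [NeZero m] (hC : IsLinearCycle v c) (hm : Odd m) : G.egirth ≤ (m - 2 : ℕ) := by
  obtain ⟨b, hb⟩ := hC.exists_isEdge hm
  obtain ⟨b', hb'b, hb'⟩ := hC.exists_isEdge_ne hb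
  exact hC.egirth_le_of_isEdge_of_isEdge hm hb hb' hb'b.symm

end IsLinearCycle

end Blowup

theorem stmt_12_general {α β : Type*} [Fintype α] [Fintype β] [DecidableEq α] [DecidableEq β]
    (k q : ℕ)
    (G : SimpleGraph (α ⊕ β)) [DecidableRel G.Adj]
    (hGirth : ((2 * k : ℕ) : ℕ∞) ≤ G.girth)
    (H : Finset (Finset ((Fin q × α) ⊕ ((Fin q × β) ⊕
        {p : α × β // G.Adj (Sum.inl p.1) (Sum.inr p.2)}))))
    (hH : H = (univ : Finset (Fin q × {p : α × β // G.Adj (Sum.inl p.1) (Sum.inr p.2)})).image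
      (fun tp => ({Sum.inr (Sum.inr tp.2), Sum.inl (tp.1, tp.2.val.1),
        Sum.inr (Sum.inl (tp.1, tp.2.val.2))} : Finset _))) :
    IsLinear H ∧ ∀ k', 1 ≤ k' → k' ≤ k → ¬ HasLinearCycle H (2 * k' + 1) := by
  subst hH
  refine ⟨Blowup.isLinear_image_hyperedge, fun k' hk' hk'k hcycle => ?_⟩
  obtain ⟨v, c, hC⟩ := Blowup.exists_isLinearCycle hcycle
  have hle : G.girth ≤ 2 * k' + 1 - 2 :=
    ENat.toNat_le_of_le_natCast (hC.egirth_le (odd_two_mul_add_one k'))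
  have hge : 2 * k ≤ G.girth := by exact_mod_cast hGirth
  omega

theorem stmt_12 {α β : Type*} [Fintype α] [Fintype β] [DecidableEq α] [DecidableEq β]
    (k q : ℕ) (hk : 2 ≤ k) (hq : 1 ≤ q)
    (G : SimpleGraph (α ⊕ β)) [DecidableRel G.Adj]
    (hBipL : ∀ a a' : α, ¬ G.Adj (Sum.inl a) (Sum.inl a'))
    (hBipR : ∀ b b' : β, ¬ G.Adj (Sum.inr b) (Sum.inr b'))
    (hGirth : ((2 * k : ℕ) : ℕ∞) ≤ G.girth)
    (H : Finset (Finset ((Fin q × α) ⊕ ((Fin q × β) ⊕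
        {p : α × β // G.Adj (Sum.inl p.1) (Sum.inr p.2)}))))
    (hH : H = (univ : Finset (Fin q × {p : α × β // G.Adj (Sum.inl p.1) (Sum.inr p.2)})).image
      (fun tp => ({Sum.inr (Sum.inr tp.2), Sum.inl (tp.1, tp.2.val.1),
        Sum.inr (Sum.inl (tp.1, tp.2.val.2))} : Finset _))) :
    IsLinear H ∧ ∀ k', 1 ≤ k' → k' ≤ k → ¬ HasLinearCycle H (2 * k' + 1) :=
  stmt_12_general k q G hGirth H hH
end
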